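/- arXiv:2508.05457 — 9 statements merged into one kernel-verified Lean document; each statement's English description precedes it below -/
import Mathlib

section
/- Let n ≥ 1, let C be an invertible n×n real matrix, and let s be an index such that the (s,s)-entry of C⁻¹ is nonzero. Define B := I − (1/2)·C, and let B̂ denote the matrix obtained from B by replacing its s-th row by zeros. Then the matrix I − B̂ is invertible, and for every index i with i ≠ s one has (B̂·(I − B̂)⁻¹)_{i,s} = (C⁻¹)_{i,s} / (C⁻¹)_{s,s}. -/
/-- Let `n ≥ 1`, let `C` be an invertible `n×n` real matrix, and let `s` be an
index such that the `(s,s)`-entry of `C⁻¹` is nonzero.  Define `B := I − (1/2)·C`, and let `B̂`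
denote the matrix obtained from `B` by replacing its `s`-th row by zeros.  Then `I − B̂` is
invertible, and for every index `i ≠ s` one has
`(B̂·(I − B̂)⁻¹)_{i,s} = (C⁻¹)_{i,s} / (C⁻¹)_{s,s}`. -/
theorem sherman_morrison_entry_formula {n : ℕ} (hn : 1 ≤ n)
    (C : Matrix (Fin n) (Fin n) ℝ) (hC : IsUnit C.det)
    (s : Fin n) (hs : C⁻¹ s s ≠ 0) :
    IsUnit ((1 : Matrix (Fin n) (Fin n) ℝ) -
        Matrix.updateRow ((1 : Matrix (Fin n) (Fin n) ℝ) - (1 / 2 : ℝ) • C) s 0).det ∧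
    ∀ i : Fin n, i ≠ s →
      (Matrix.updateRow ((1 : Matrix (Fin n) (Fin n) ℝ) - (1 / 2 : ℝ) • C) s 0 *
          ((1 : Matrix (Fin n) (Fin n) ℝ) -
            Matrix.updateRow ((1 : Matrix (Fin n) (Fin n) ℝ) - (1 / 2 : ℝ) • C) s 0)⁻¹) i s =
        C⁻¹ i s / C⁻¹ s s := by
  set B := Matrix.updateRow ((1 : Matrix (Fin n) (Fin n) ℝ) - (1 / 2 : ℝ) • C) s 0 with hB
  set M := (1 : Matrix (Fin n) (Fin n) ℝ) - B with hM
  have hmul : C * C⁻¹ = 1 := Matrix.mul_nonsing_inv C hC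
  set N : Matrix (Fin n) (Fin n) ℝ := fun j k =>
      2 * C⁻¹ j k - C⁻¹ j s / C⁻¹ s s * (2 * C⁻¹ s k - if s = k then 1 else 0) with hN
  have hMapp : ∀ j k, M j k = if j = s then (if s = k then 1 else 0)
      else (1/2 : ℝ) * C j k := by
    intro j k
    by_cases hj : j = s
    · subst hj
      simp [hM, hB, Matrix.sub_apply, Matrix.updateRow_apply, Matrix.one_apply, eq_comm]
    · by_cases hk : j = k
      · subst hk
        simp [hM, hB, Matrix.sub_apply, Matrix.updateRow_apply, hj, Matrix.one_apply]
      · simp [hM, hB, Matrix.sub_apply, Matrix.updateRow_apply, hj, hk, Matrix.one_apply]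
  have hMN : M * N = 1 := by
    ext j k
    rw [Matrix.mul_apply]
    by_cases hj : j = s
    · have step : ∀ l, M j l * N l k = (if l = s then N s k else 0) := by
        intro l
        rw [hMapp, if_pos hj]
        by_cases hl : l = s
        · subst hl; simp
        · rw [if_neg (fun h => hl h.symm), if_neg hl, zero_mul]
      simp only [step, Finset.sum_ite_eq', Finset.mem_univ, if_true]
      rw [hj, hN]
      simp only
      rw [div_self hs]
      simp [Matrix.one_apply, eq_comm]
    · have key : ∀ l, M j l * N l k =
          C j l * C⁻¹ l k - (C j l * C⁻¹ l s) *
            ((2 * C⁻¹ s k - if s = k then 1 else 0) / (2 * C⁻¹ s s)) := by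
        intro l
        rw [hMapp, if_neg hj, hN]
        simp only
        field_simp
      simp only [key]
      rw [Finset.sum_sub_distrib, ← Finset.sum_mul, ← Matrix.mul_apply, ← Matrix.mul_apply, hmul]
      rw [Matrix.one_apply_ne hj]
      simp [Matrix.one_apply]
  have hdet : IsUnit M.det := by
    have := congrArg Matrix.det hMN
    rw [Matrix.det_mul, Matrix.det_one] at this
    exact isUnit_iff_exists_inv.mpr ⟨_, this⟩
  refine ⟨hdet, ?_⟩
  have hinv : M⁻¹ = N := Matrix.inv_eq_right_inv hMN
  intro i hi
  have hBM : B = 1 - M := by rw [hM]; abel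
  have hprod : B * M⁻¹ = M⁻¹ - 1 := by
    rw [hBM, sub_mul, one_mul, Matrix.mul_nonsing_inv _ hdet]
  show (B * M⁻¹) i s = C⁻¹ i s / C⁻¹ s s
  rw [hprod, Matrix.sub_apply, Matrix.one_apply_ne hi, hinv, hN]
  simp only [if_pos rfl]
  generalize C⁻¹ i s = x
  generalize hd : C⁻¹ s s = d at hs ⊢
  field_simp
  simp
end

section
/- Let n ≥ 1, let C be an invertible n×n real matrix, and let s be an index such that the (s,s)-entry of C⁻¹ is nonzero. Define B := I − (1/2)·C, and let B̂ denote the matrix obtained from B by replacing its s-th row by zeros. Then I − B̂ is invertible and its inverse is given entrywise by ((I − B̂)⁻¹)_{j,k} = 2·(C⁻¹)_{j,k} + (C⁻¹)_{j,s}·(δ_{s,k} − 2·(C⁻¹)_{s,k}) / (C⁻¹)_{s,s} for all indices j, k, where δ_{s,k} is the Kronecker delta. -/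
/-- Let `n ≥ 1`, let `C` be an invertible `n×n` real matrix, and let `s` be an
index such that the `(s,s)`-entry of `C⁻¹` is nonzero.  Define `B := I − (1/2)·C`, and let `B̂`
denote the matrix obtained from `B` by replacing its `s`-th row by zeros.  Then `I − B̂` is
invertible and its inverse is given entrywise by
`((I − B̂)⁻¹)_{j,k} = 2·(C⁻¹)_{j,k} + (C⁻¹)_{j,s}·(δ_{s,k} − 2·(C⁻¹)_{s,k}) / (C⁻¹)_{s,s}`. -/
theorem sherman_morrison_inverse_formula {n : ℕ} (hn : 1 ≤ n)
    (C : Matrix (Fin n) (Fin n) ℝ) (hC : IsUnit C.det)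
    (s : Fin n) (hs : C⁻¹ s s ≠ 0) :
    IsUnit ((1 : Matrix (Fin n) (Fin n) ℝ) -
        Matrix.updateRow ((1 : Matrix (Fin n) (Fin n) ℝ) - (1 / 2 : ℝ) • C) s 0).det ∧
    ∀ j k : Fin n,
      (((1 : Matrix (Fin n) (Fin n) ℝ) -
          Matrix.updateRow ((1 : Matrix (Fin n) (Fin n) ℝ) - (1 / 2 : ℝ) • C) s 0)⁻¹) j k =
        2 * C⁻¹ j k +
          C⁻¹ j s * ((if s = k then (1 : ℝ) else 0) - 2 * C⁻¹ s k) / C⁻¹ s s := by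
  have hCC : C * C⁻¹ = 1 := Matrix.mul_nonsing_inv C hC
  set A : Matrix (Fin n) (Fin n) ℝ :=
    (1 : Matrix (Fin n) (Fin n) ℝ) -
      Matrix.updateRow ((1 : Matrix (Fin n) (Fin n) ℝ) - (1 / 2 : ℝ) • C) s 0 with hA
  set M : Matrix (Fin n) (Fin n) ℝ := fun j k =>
    2 * C⁻¹ j k + C⁻¹ j s * ((if s = k then (1 : ℝ) else 0) - 2 * C⁻¹ s k) / C⁻¹ s s with hM
  have hAentry : ∀ j l, A j l =
      if j = s then (if s = l then 1 else 0) else (1 / 2) * C j l := by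
    intro j l
    by_cases hj : j = s
    · subst hj
      simp [hA, Matrix.sub_apply, Matrix.updateRow_self, Matrix.one_apply]
    · simp only [hA, Matrix.sub_apply, Matrix.updateRow_ne hj, Matrix.smul_apply,
        Matrix.one_apply, if_neg hj, smul_eq_mul]
      ring
  have hCi : ∀ j k, (∑ l, C j l * C⁻¹ l k) = if j = k then (1 : ℝ) else 0 := by
    intro j k
    have := congrFun (congrFun hCC j) k
    rwa [Matrix.mul_apply, Matrix.one_apply] at this
  have hAM : A * M = 1 := by
    ext j k
    rw [Matrix.mul_apply, Matrix.one_apply]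
    by_cases hj : j = s
    · subst hj
      have hrow : ∀ l, A j l * M l k = if j = l then M l k else 0 := by
        intro l
        rw [hAentry, if_pos rfl]
        by_cases h : j = l <;> simp [h]
      rw [Finset.sum_congr rfl fun l _ => hrow l, Finset.sum_ite_eq]
      simp only [Finset.mem_univ, if_true, hM]
      by_cases hk : j = k
      · simp only [if_pos hk]
        rw [mul_div_cancel_left₀ _ hs]
        ring
      · simp only [if_neg hk]
        rw [mul_div_cancel_left₀ _ hs]
        ring
    · have step : ∀ l, A j l * M l k =
          C j l * C⁻¹ l k + (C j l * C⁻¹ l s) *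
            (((if s = k then (1:ℝ) else 0) - 2 * C⁻¹ s k) / (2 * C⁻¹ s s)) := by
        intro l
        rw [hAentry, if_neg hj, hM]
        field_simp
      calc (∑ l, A j l * M l k)
          = (∑ l, C j l * C⁻¹ l k) + (∑ l, C j l * C⁻¹ l s) *
              (((if s = k then (1:ℝ) else 0) - 2 * C⁻¹ s k) / (2 * C⁻¹ s s)) := by
            simp_rw [step]
            rw [Finset.sum_add_distrib, ← Finset.sum_mul]
        _ = if j = k then 1 else 0 := by
            rw [hCi, hCi, if_neg hj]
            ring
  have hdet : IsUnit A.det := Matrix.isUnit_det_of_right_inverse hAM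
  refine ⟨hdet, fun j k => ?_⟩
  rw [Matrix.inv_eq_right_inv hAM]
end

section
/- Let C be a finite-type Cartan matrix of size n. Then every root in ℂ of the characteristic polynomial of the Coxeter adjacency matrix A := 2·I − C has modulus strictly less than 2. -/
/-- A finite-type Cartan matrix: an integer square matrix (on a nonempty finite index set) with
`2`'s on the diagonal, nonpositive off-diagonal entries, which becomes symmetric positive
definite after multiplication by some diagonal matrix with strictly positive diagonal. -/
def IsFiniteCartan {ι : Type*} [Fintype ι] (C : Matrix ι ι ℤ) : Prop :=
  Nonempty ι ∧ (∀ i, C i i = 2) ∧ (∀ i j, i ≠ j → C i j ≤ 0) ∧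
    ∃ D : Matrix ι ι ℝ, D.IsDiag ∧ (∀ i, 0 < D i i) ∧
      (D * C.map (Int.cast : ℤ → ℝ)).PosDef

open Matrix Polynomial Finset

/-- Evaluating the characteristic polynomial at a point gives the determinant of `z • 1 - M`. -/
lemma eval_charpoly_aux {n : ℕ} (M : Matrix (Fin n) (Fin n) ℂ) (z : ℂ) :
    M.charpoly.eval z = (z • (1 : Matrix (Fin n) (Fin n) ℂ) - M).det := by
  rw [Matrix.charpoly, ← Polynomial.coe_evalRingHom, RingHom.map_det]
  congr 1
  ext i j
  by_cases h : i = j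
  · subst h
    simp [Matrix.charmatrix_apply_eq, Matrix.one_apply]
  · simp [Matrix.charmatrix_apply_ne _ _ _ h, Matrix.one_apply_ne h]

lemma two_matrix_apply {n : ℕ} (i j : Fin n) :
    (2 : Matrix (Fin n) (Fin n) ℤ) i j = if i = j then 2 else 0 := by
  rw [show (2 : Matrix (Fin n) (Fin n) ℤ) = 1 + 1 from one_add_one_eq_two.symm]
  by_cases h : i = j
  · subst h; simp [Matrix.one_apply]
  · simp [Matrix.one_apply_ne h, h]

/-- Let `C` be a finite-type Cartan matrix of size `n`.  Then every complex
eigenvalue of the Coxeter adjacency matrix `A := 2·I − C` (i.e. every root in `ℂ` of the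
characteristic polynomial of `2·I − C`) has modulus strictly less than `2`. -/
theorem coxeter_adjacency_eigenvalues_lt_two {n : ℕ}
    (C : Matrix (Fin n) (Fin n) ℤ) (hC : IsFiniteCartan C) (z : ℂ)
    (hz : (((2 : Matrix (Fin n) (Fin n) ℤ) - C).map (Int.cast : ℤ → ℂ)).charpoly.IsRoot z) :
    ‖z‖ < 2 := by
  obtain ⟨-, hdiag, hoff, D, hD, hDpos, hPD⟩ := hC
  set A : Matrix (Fin n) (Fin n) ℤ := 2 - C with hA
  -- entries of A are nonnegative
  have hAnn : ∀ i j, (0 : ℤ) ≤ A i j := by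
    intro i j
    have h2 := two_matrix_apply i j
    by_cases h : i = j
    · subst h
      simp [hA, Matrix.sub_apply, hdiag i, h2]
    · have := hoff i j h
      simp only [hA, Matrix.sub_apply, h2, if_neg h]
      omega
  -- (A i j : ℝ) in terms of C
  have haij : ∀ i j : Fin n, ((A i j : ℝ)) = (if i = j then 2 else 0) - (C i j : ℝ) := by
    intro i j
    simp only [hA, Matrix.sub_apply, two_matrix_apply]
    by_cases h : i = j <;> simp [h]
  -- extract an eigenvector
  set Aℂ := (A.map (Int.cast : ℤ → ℂ)) with hAC
  have hdet : (z • (1 : Matrix (Fin n) (Fin n) ℂ) - Aℂ).det = 0 := by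
    rw [← eval_charpoly_aux]
    exact hz
  obtain ⟨v, hv0, hv⟩ := (Matrix.exists_mulVec_eq_zero_iff).2 hdet
  have heig : ∀ i, z * v i = ∑ j, ((A i j : ℂ)) * v j := by
    intro i
    have h := congrFun hv i
    simp only [Matrix.sub_mulVec, Matrix.smul_mulVec, Matrix.one_mulVec, Pi.sub_apply,
      Pi.smul_apply, Pi.zero_apply, smul_eq_mul] at h
    rw [sub_eq_zero] at h
    rw [h]
    simp [Matrix.mulVec, dotProduct, hAC, Matrix.map_apply]
  -- real data
  set y : Fin n → ℝ := fun i => ‖v i‖ with hy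
  set d : Fin n → ℝ := fun i => D i i with hd
  have hann : ∀ i j : Fin n, (0 : ℝ) ≤ (A i j : ℝ) := fun i j => by exact_mod_cast hAnn i j
  have hynn : ∀ i, 0 ≤ y i := fun i => norm_nonneg _
  -- s := ∑ d i * y i ^ 2 is positive
  set s : ℝ := ∑ i, d i * y i ^ 2 with hs
  obtain ⟨i₀, hi₀⟩ := Function.ne_iff.mp hv0
  have hs0 : 0 < s := by
    apply Finset.sum_pos' (fun i _ => mul_nonneg (hDpos i).le (sq_nonneg _))
    refine ⟨i₀, Finset.mem_univ _, ?_⟩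
    have hy0 : 0 < y i₀ := by simpa [hy] using (norm_pos_iff.mpr hi₀)
    have := hDpos i₀
    positivity
  -- Step 1 : |z| * s ≤ double sum
  have step1 : ‖z‖ * s ≤ ∑ i, ∑ j, d i * (A i j : ℝ) * y i * y j := by
    have key : ∀ i, ‖z‖ * y i ≤ ∑ j, (A i j : ℝ) * y j := by
      intro i
      calc ‖z‖ * y i = ‖z * v i‖ := (norm_mul z (v i)).symm
        _ = ‖∑ j, ((A i j : ℂ)) * v j‖ := by rw [heig i]
        _ ≤ ∑ j, ‖((A i j : ℂ)) * v j‖ := norm_sum_le _ _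
        _ = ∑ j, (A i j : ℝ) * y j := by
            refine Finset.sum_congr rfl fun j _ => ?_
            rw [norm_mul]
            congr 1
            rw [show ((A i j : ℂ)) = ((A i j : ℝ) : ℂ) by push_cast; ring]
            rw [Complex.norm_real, Real.norm_of_nonneg (hann i j)]
    calc ‖z‖ * s = ∑ i, d i * y i * (‖z‖ * y i) := by
          rw [hs, Finset.mul_sum]; refine Finset.sum_congr rfl fun i _ => by ring
      _ ≤ ∑ i, d i * y i * (∑ j, (A i j : ℝ) * y j) := by
          refine Finset.sum_le_sum fun i _ => ?_
          exact mul_le_mul_of_nonneg_left (key i) (mul_nonneg (hDpos i).le (hynn i))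
      _ = ∑ i, ∑ j, d i * (A i j : ℝ) * y i * y j := by
          refine Finset.sum_congr rfl fun i _ => ?_
          rw [Finset.mul_sum]
          refine Finset.sum_congr rfl fun j _ => by ring
  -- Step 2 : positive definiteness gives the quadratic form bound
  have hyne : y ≠ 0 := by
    intro h
    have := congrFun h i₀
    simp only [hy, Pi.zero_apply] at this
    exact hi₀ (norm_eq_zero.mp this)
  have hposdef : 0 < dotProduct (star y) ((D * C.map (Int.cast : ℤ → ℝ)) *ᵥ y) :=
    hPD.dotProduct_mulVec_pos hyne
  have hquad : dotProduct (star y) ((D * C.map (Int.cast : ℤ → ℝ)) *ᵥ y)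
      = ∑ i, ∑ j, d i * (C i j : ℝ) * y i * y j := by
    simp only [dotProduct, Matrix.mulVec, dotProduct, Pi.star_apply, star_trivial,
      Matrix.mul_apply]
    refine Finset.sum_congr rfl fun i _ => ?_
    rw [Finset.mul_sum]
    refine Finset.sum_congr rfl fun j _ => ?_
    rw [Finset.sum_eq_single i (fun b _ hb => by rw [hD (Ne.symm hb)]; ring) (by simp),
      Matrix.map_apply]
    simp only [hd]
    ring
  -- Step 3 : the double sum equals 2 * s minus the positive quadratic form
  have step3 : ∑ i, ∑ j, d i * (A i j : ℝ) * y i * y j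
      = 2 * s - ∑ i, ∑ j, d i * (C i j : ℝ) * y i * y j := by
    have hsplit : ∀ i : Fin n, ∑ j, d i * (A i j : ℝ) * y i * y j
        = 2 * (d i * y i ^ 2) - ∑ j, d i * (C i j : ℝ) * y i * y j := by
      intro i
      have : ∀ j, d i * (A i j : ℝ) * y i * y j
          = d i * (if i = j then 2 else 0) * y i * y j - d i * (C i j : ℝ) * y i * y j := by
        intro j; rw [haij i j]; ring
      rw [Finset.sum_congr rfl fun j _ => this j, Finset.sum_sub_distrib]
      congr 1
      rw [Finset.sum_eq_single i (fun b _ hb => by simp [Ne.symm hb]) (by simp)]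
      simp; ring
    rw [Finset.sum_congr rfl fun i _ => hsplit i, Finset.sum_sub_distrib, ← Finset.mul_sum, hs]
  -- conclude
  have hlt : ‖z‖ * s < 2 * s := by
    calc ‖z‖ * s ≤ ∑ i, ∑ j, d i * (A i j : ℝ) * y i * y j := step1
      _ = 2 * s - ∑ i, ∑ j, d i * (C i j : ℝ) * y i * y j := step3
      _ < 2 * s := by rw [← hquad]; linarith [hposdef]
  exact lt_of_mul_lt_mul_right (by linarith [hlt]) hs0.le
end

section
/- Let C be a finite-type Cartan matrix of size n, let s be an index, define B := I − (1/2)·C, and let B̂ denote the matrix obtained from B by replacing its s-th row by zeros. Then every complex eigenvalue of B̂ has absolute value strictly less than 1. -/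
/-- Let `C` be a finite-type Cartan matrix of size `n`, let `s` be an index, define
`B := I − (1/2)·C`, and let `B̂` denote the matrix obtained from `B` by replacing its `s`-th row
by zeros.  Then every complex eigenvalue of `B̂` (i.e. every root in `ℂ` of its characteristic
polynomial) has modulus strictly less than `1`. -/
theorem truncated_matrix_eigenvalues_lt_one {n : ℕ}
    (C : Matrix (Fin n) (Fin n) ℤ) (hC : IsFiniteCartan C) (s : Fin n) (z : ℂ)
    (hz : (Matrix.updateRow
        ((1 : Matrix (Fin n) (Fin n) ℂ) - (1 / 2 : ℂ) • C.map (Int.cast : ℤ → ℂ)) s 0).charpoly.IsRoot z) :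
    ‖z‖ < 1 := by
  classical
  obtain ⟨hne, hdiag, hoff, D, hDdiag, hDpos, hposdef⟩ := hC
  set M := Matrix.updateRow
      ((1 : Matrix (Fin n) (Fin n) ℂ) - (1 / 2 : ℂ) • C.map (Int.cast : ℤ → ℂ)) s 0 with hM
  -- z is a genuine eigenvalue: get an eigenvector
  have hdet : (z • (1 : Matrix (Fin n) (Fin n) ℂ) - M).det = 0 := by
    have h := hz
    rw [Polynomial.IsRoot, Matrix.charpoly, ← Polynomial.coe_evalRingHom,
      RingHom.map_det] at h
    rw [← h]
    congr 1
    ext i j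
    by_cases hij : i = j <;>
      simp [Matrix.charmatrix_apply, Matrix.one_apply, Matrix.diagonal_apply, hij]
  obtain ⟨v, hv0, hv⟩ := (Matrix.exists_mulVec_eq_zero_iff).2 hdet
  have heig : ∀ i, M.mulVec v i = z * v i := by
    intro i
    have h := congrFun hv i
    rw [Matrix.sub_mulVec] at h
    have h1 : (z • (1 : Matrix (Fin n) (Fin n) ℂ)).mulVec v i = z * v i := by
      rw [Matrix.smul_mulVec, Matrix.one_mulVec]
      simp
    have := sub_eq_zero.mp h
    rw [h1] at this
    exact this.symm
  -- the real nonnegative matrix of absolute values of entries of M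
  set b : Matrix (Fin n) (Fin n) ℝ :=
    fun i j => if i = s then 0 else if i = j then 0 else -(C i j : ℝ) / 2 with hb
  have hbnn : ∀ i j, 0 ≤ b i j := by
    intro i j
    simp only [hb]
    split_ifs with h1 h2
    · exact le_refl 0
    · exact le_refl 0
    · have : (C i j : ℝ) ≤ 0 := by exact_mod_cast hoff i j h2
      linarith
  have hMb : ∀ i j, M i j = ((b i j : ℝ) : ℂ) := by
    intro i j
    by_cases h1 : i = s
    · subst h1; simp [hM, hb]
    · by_cases h2 : i = j
      · subst h2
        simp only [hM, hb, Matrix.updateRow_ne h1, Matrix.sub_apply, Matrix.one_apply_eq,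
          Matrix.smul_apply, Matrix.map_apply, hdiag i, if_neg h1, if_pos rfl, smul_eq_mul]
        push_cast
        ring
      · simp only [hM, hb, Matrix.updateRow_ne h1, Matrix.sub_apply, Matrix.one_apply_ne h2,
          Matrix.smul_apply, Matrix.map_apply, if_neg h1, if_neg h2, smul_eq_mul]
        push_cast
        ring
  set w : Fin n → ℝ := fun i => ‖v i‖ with hw
  have hwnn : ∀ i, 0 ≤ w i := fun i => norm_nonneg _
  have hw0 : w ≠ 0 := by
    intro h
    apply hv0
    funext i
    have := congrFun h i
    simpa [hw, norm_eq_zero] using this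
  -- key inequality
  have hkey : ∀ i, ‖z‖ * w i ≤ ∑ j, b i j * w j := by
    intro i
    have : ‖z‖ * w i = ‖M.mulVec v i‖ := by
      rw [heig i, norm_mul]
    rw [this, Matrix.mulVec, dotProduct]
    calc ‖∑ j, M i j * v j‖ ≤ ∑ j, ‖M i j * v j‖ :=
          norm_sum_le _ _
      _ = ∑ j, b i j * w j := by
          refine Finset.sum_congr rfl fun j _ => ?_
          rw [norm_mul, hMb i j, Complex.norm_real, Real.norm_eq_abs, abs_of_nonneg (hbnn i j)]
  by_contra hcon
  push_neg at hcon
  -- hcon : 1 ≤ Complex.abs z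
  have hwle : ∀ i, w i ≤ ∑ j, b i j * w j := fun i =>
    le_trans (le_mul_of_one_le_left (hwnn i) hcon) (hkey i)
  set Cr := C.map (Int.cast : ℤ → ℝ) with hCr
  have hCw : ∀ i, Cr.mulVec w i ≤ 0 := by
    intro i
    have hterm : ∀ j, Cr i j * w j + 2 * (b i j * w j) ≤ if j = i then 2 * w i else 0 := by
      intro j
      have hCrij : ∀ a b_1 : Fin n, Cr a b_1 = ((C a b_1 : ℤ) : ℝ) := fun _ _ => rfl
      by_cases h2 : j = i
      · subst h2
        have hbd : b j j = 0 := by simp [hb]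
        rw [if_pos rfl, hbd, hCrij, hdiag j]
        push_cast
        ring_nf
        exact le_refl _
      · rw [if_neg h2]
        have hC : (C i j : ℝ) ≤ 0 := by
          exact_mod_cast hoff i j (fun h => h2 h.symm)
        by_cases h1 : i = s
        · have hbd : b i j = 0 := by simp [hb, h1]
          rw [hbd, hCrij]
          push_cast
          nlinarith [hwnn j]
        · have hbd : b i j = -(C i j : ℝ) / 2 := by
            have hij : i ≠ j := fun h => h2 h.symm
            simp [hb, h1, hij]
          rw [hbd, hCrij]
          push_cast
          nlinarith [hwnn j]
    have hsum : ∑ j, (Cr i j * w j + 2 * (b i j * w j)) ≤ 2 * w i := by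
      calc ∑ j, (Cr i j * w j + 2 * (b i j * w j))
          ≤ ∑ j, (if j = i then 2 * w i else 0) := Finset.sum_le_sum fun j _ => hterm j
        _ = 2 * w i := by simp
    rw [Matrix.mulVec, dotProduct]
    have h2 : 2 * w i ≤ 2 * ∑ j, b i j * w j := by linarith [hwle i]
    have := hsum
    rw [Finset.sum_add_distrib, ← Finset.mul_sum] at this
    linarith
  -- positive definiteness contradiction
  have hpos := hposdef.dotProduct_mulVec_pos hw0
  have hDiag : ∀ i j, i ≠ j → D i j = 0 := fun i j h => hDdiag h
  have hquad : dotProduct (star w) ((D * Cr).mulVec w) ≤ 0 := by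
    rw [← Matrix.mulVec_mulVec, dotProduct]
    apply Finset.sum_nonpos
    intro i _
    have hDi : (D.mulVec (Cr.mulVec w)) i = D i i * (Cr.mulVec w) i := by
      rw [Matrix.mulVec, dotProduct]
      rw [Finset.sum_eq_single i]
      · intro j _ hji; rw [hDiag i j (Ne.symm hji), zero_mul]
      · intro h; exact absurd (Finset.mem_univ i) h
    rw [hDi]
    have : D i i * (Cr.mulVec w) i ≤ 0 :=
      mul_nonpos_of_nonneg_of_nonpos (le_of_lt (hDpos i)) (hCw i)
    have hstar : star w i = w i := rfl
    simp only [Pi.star_apply, star_trivial]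
    nlinarith [hwnn i, hDpos i, hCw i, this]
  exact absurd hpos (not_lt.mpr hquad)
end

section
/- Let C be a finite-type Cartan matrix of size n, let s be an index, define B := I − (1/2)·C, and let B̂ denote the matrix obtained from B by replacing its s-th row by zeros. Then the matrix I − B̂ is invertible, the series ∑_{m=1}^∞ B̂^m converges in the space of n×n real matrices, and its sum equals B̂·(I − B̂)⁻¹. -/
open Matrix Finset Filter

section Aux
variable {n : ℕ}

lemma myDot_self_nonneg (x : Fin n → ℝ) : 0 ≤ x ⬝ᵥ x :=
  Finset.sum_nonneg fun i _ => mul_self_nonneg _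

lemma myDot_self_pos {x : Fin n → ℝ} (hx : x ≠ 0) : 0 < x ⬝ᵥ x :=
  (myDot_self_nonneg x).lt_of_ne fun h => hx ((dotProduct_self_eq_zero).mp h.symm)

lemma unitary_dot {U : Matrix (Fin n) (Fin n) ℝ} (h : Uᵀ * U = 1) (z : Fin n → ℝ) :
    (U *ᵥ z) ⬝ᵥ (U *ᵥ z) = z ⬝ᵥ z := by
  rw [dotProduct_mulVec]
  have h2 : (U *ᵥ z) ᵥ* U = z := by
    rw [← mulVec_transpose, mulVec_mulVec, h, one_mulVec]
  rw [h2]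

lemma sym_contraction (hn : 0 < n) (S : Matrix (Fin n) (Fin n) ℝ) (hS : S.IsHermitian)
    (h1 : ((1 : Matrix (Fin n) (Fin n) ℝ) - S).PosDef)
    (h2 : ((1 : Matrix (Fin n) (Fin n) ℝ) + S).PosDef) :
    ∃ r : ℝ, 0 ≤ r ∧ r < 1 ∧
      ∀ x : Fin n → ℝ, (S *ᵥ x) ⬝ᵥ (S *ᵥ x) ≤ r ^ 2 * (x ⬝ᵥ x) := by
  haveI : Nonempty (Fin n) := ⟨⟨0, hn⟩⟩
  set V : Matrix (Fin n) (Fin n) ℝ := ↑(hS.eigenvectorUnitary) with hV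
  set μ : Fin n → ℝ := hS.eigenvalues with hμ
  have hVt : star V = Vᵀ := by
    ext i j; simp [conjTranspose_apply]
  have hsV : star V * V = 1 := mem_unitaryGroup_iff'.mp hS.eigenvectorUnitary.2
  have hVs : V * star V = 1 := mem_unitaryGroup_iff.mp hS.eigenvectorUnitary.2
  have hVtV : Vᵀ * V = 1 := by rw [← hVt]; exact hsV
  have hVVt : V * Vᵀ = 1 := by rw [← hVt]; exact hVs
  have hSpec : S = V * diagonal μ * Vᵀ := by
    have := hS.spectral_theorem
    simpa [← hVt, hμ, Function.comp] using this
  -- eigenvalue bounds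
  have habs : ∀ j, |μ j| < 1 := by
    intro j
    set x : Fin n → ℝ := V *ᵥ Pi.single j 1 with hx
    have hx0 : x ≠ 0 := by
      intro h
      have : Vᵀ *ᵥ x = Pi.single j 1 := by
        rw [hx, mulVec_mulVec, hVtV, one_mulVec]
      rw [h, mulVec_zero] at this
      have := congrFun this j
      simp at this
    have hq : 0 < x ⬝ᵥ x := myDot_self_pos hx0
    have hSV : S * V = V * diagonal μ := by
      rw [hSpec, mul_assoc, mul_assoc, hVtV, mul_one]
    have hsingle : Pi.single j (μ j) = μ j • (Pi.single j 1 : Fin n → ℝ) := by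
      ext i; simp [Pi.single_apply]
    have hSx : S *ᵥ x = μ j • x := by
      rw [hx, mulVec_mulVec, hSV, ← mulVec_mulVec, diagonal_mulVec_single, mul_one,
        hsingle, mulVec_smul]
    have e1 := h1.dotProduct_mulVec_pos hx0
    have e2 := h2.dotProduct_mulVec_pos hx0
    rw [star_trivial, sub_mulVec, one_mulVec, dotProduct_sub, hSx, dotProduct_smul,
      smul_eq_mul] at e1
    rw [star_trivial, add_mulVec, one_mulVec, dotProduct_add, hSx, dotProduct_smul,
      smul_eq_mul] at e2
    rw [abs_lt]
    constructor
    · nlinarith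
    · nlinarith
  refine ⟨univ.sup' univ_nonempty fun j => |μ j|, ?_, ?_, ?_⟩
  · exact le_trans (abs_nonneg (μ (Classical.arbitrary (Fin n))))
      (Finset.le_sup' (fun j => |μ j|) (mem_univ (Classical.arbitrary (Fin n))))
  · exact (sup'_lt_iff _).mpr fun j _ => habs j
  · intro x
    set r : ℝ := univ.sup' univ_nonempty fun j => |μ j| with hr
    have hrj : ∀ j, |μ j| ≤ r := fun j => Finset.le_sup' (fun j => |μ j|) (mem_univ j)
    have hq1 : S *ᵥ x = V *ᵥ (diagonal μ *ᵥ (Vᵀ *ᵥ x)) := by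
      rw [hSpec, mulVec_mulVec, mulVec_mulVec]
    set y : Fin n → ℝ := Vᵀ *ᵥ x with hy
    set z : Fin n → ℝ := diagonal μ *ᵥ y with hz
    rw [hq1]
    rw [unitary_dot hVtV z]
    have hyx : y ⬝ᵥ y = x ⬝ᵥ x := by
      have : (Vᵀ)ᵀ * Vᵀ = 1 := by rw [transpose_transpose]; exact hVVt
      exact unitary_dot this x
    have hzz : z ⬝ᵥ z ≤ r ^ 2 * (y ⬝ᵥ y) := by
      rw [hz]
      simp only [dotProduct, mulVec_diagonal]
      rw [Finset.mul_sum]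
      refine Finset.sum_le_sum fun i _ => ?_
      have h1' : |μ i| ≤ r := hrj i
      have h0 : (0:ℝ) ≤ r := le_trans (abs_nonneg _) h1'
      have hμ2 : μ i * μ i ≤ r * r := by
        have := mul_self_le_mul_self (abs_nonneg (μ i)) h1'
        rwa [abs_mul_abs_self] at this
      nlinarith [mul_self_nonneg (y i)]
    rw [← hyx]
    exact hzz

variable {n : ℕ}
lemma quad_expand (M : Matrix (Fin n) (Fin n) ℝ) (x : Fin n → ℝ) :
    x ⬝ᵥ (M *ᵥ x) = ∑ i, ∑ j, x i * M i j * x j := by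
  simp only [dotProduct, mulVec, Finset.mul_sum, mul_assoc]

lemma posdef_congr {A : Matrix (Fin n) (Fin n) ℝ} (hA : A.PosDef) {w : Fin n → ℝ}
    (hw : ∀ i, w i ≠ 0) : (diagonal w * A * diagonal w).PosDef := by
  have hdstar : (diagonal w)ᴴ = diagonal w := by
    rw [diagonal_conjTranspose]
    congr 1
  refine Matrix.PosDef.of_dotProduct_mulVec_pos ?_ ?_
  · have := isHermitian_conjTranspose_mul_mul (diagonal w) hA.1
    rwa [hdstar] at this
  · intro x hx
    have hy : diagonal w *ᵥ x ≠ 0 := by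
      intro h
      apply hx
      funext i
      have := congrFun h i
      simp only [mulVec_diagonal, Pi.zero_apply] at this
      exact (mul_eq_zero.mp this).resolve_left (hw i)
    have hpos := hA.dotProduct_mulVec_pos hy
    rw [star_trivial] at hpos ⊢
    have key : x ⬝ᵥ ((diagonal w * A * diagonal w) *ᵥ x)
        = (diagonal w *ᵥ x) ⬝ᵥ (A *ᵥ (diagonal w *ᵥ x)) := by
      rw [← mulVec_mulVec, ← mulVec_mulVec]
      simp only [dotProduct, mulVec_diagonal]
      exact Finset.sum_congr rfl fun i _ => by ring
    rw [key]
    exact hpos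

lemma posdef_four_sub {A : Matrix (Fin n) (Fin n) ℝ} (hA : A.PosDef)
    (hdiag : ∀ i, A i i = 2) (hoff : ∀ i j, i ≠ j → A i j ≤ 0) :
    ((4 : ℝ) • (1 : Matrix (Fin n) (Fin n) ℝ) - A).PosDef := by
  refine Matrix.PosDef.of_dotProduct_mulVec_pos ?_ ?_
  · show _ᴴ = _
    rw [conjTranspose_sub, conjTranspose_smul, hA.1.eq]
    norm_num
  · intro x hx
    have hxa : (fun i => |x i|) ≠ 0 := by
      intro h
      apply hx
      funext i
      have := congrFun h i
      simpa using this
    have hpos := hA.dotProduct_mulVec_pos hxa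
    rw [star_trivial] at hpos ⊢
    rw [quad_expand] at hpos ⊢
    refine lt_of_lt_of_le hpos ?_
    refine Finset.sum_le_sum fun i _ => Finset.sum_le_sum fun j _ => ?_
    rcases eq_or_ne i j with rfl | hij
    · simp only [Matrix.sub_apply, Matrix.smul_apply, one_apply_eq, smul_eq_mul, mul_one, hdiag]
      nlinarith [abs_mul_abs_self (x i)]
    · have h0 : A i j ≤ 0 := hoff i j hij
      have habs : |x i| * |x j| = |x i * x j| := (abs_mul _ _).symm
      simp only [Matrix.sub_apply, Matrix.smul_apply, one_apply_ne hij, smul_eq_mul, mul_zero, zero_sub]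
      have h1 : |x i| * A i j * |x j| = A i j * (|x i| * |x j|) := by ring
      have h2 : x i * -A i j * x j = -(A i j * (x i * x j)) := by ring
      rw [h1, h2]
      rw [habs]
      nlinarith [neg_abs_le (x i * x j), abs_nonneg (x i * x j)]

lemma posdef_smul {A : Matrix (Fin n) (Fin n) ℝ} (hA : A.PosDef) {c : ℝ} (hc : 0 < c) :
    (c • A).PosDef := by
  refine Matrix.PosDef.of_dotProduct_mulVec_pos ?_ ?_
  · show _ᴴ = _
    rw [conjTranspose_smul, hA.1.eq, star_trivial]
  · intro x hx
    have := hA.dotProduct_mulVec_pos hx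
    rw [smul_mulVec, dotProduct_smul, smul_eq_mul]
    exact mul_pos hc this

end Aux


/-- Let `C` be a finite-type Cartan matrix of size `n`, let `s` be an index, define
`B := I − (1/2)·C` (as a real matrix), and let `B̂` denote the matrix obtained from `B` by
replacing its `s`-th row by zeros.  Then `I − B̂` is invertible, the series `∑_{m=1}^∞ B̂^m`
converges in the space of `n×n` real matrices, and its sum equals `B̂·(I − B̂)⁻¹`. -/
theorem geometric_series_of_truncated_matrix {n : ℕ}
    (C : Matrix (Fin n) (Fin n) ℤ) (hC : IsFiniteCartan C) (s : Fin n) :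
    IsUnit ((1 : Matrix (Fin n) (Fin n) ℝ) -
        Matrix.updateRow
          ((1 : Matrix (Fin n) (Fin n) ℝ) - (1 / 2 : ℝ) • C.map (Int.cast : ℤ → ℝ)) s 0).det ∧
    Filter.Tendsto
      (fun N : ℕ => ∑ m ∈ Finset.range N,
        (Matrix.updateRow
          ((1 : Matrix (Fin n) (Fin n) ℝ) - (1 / 2 : ℝ) • C.map (Int.cast : ℤ → ℝ)) s 0) ^ (m + 1))
      Filter.atTop
      (nhds ((Matrix.updateRow
          ((1 : Matrix (Fin n) (Fin n) ℝ) - (1 / 2 : ℝ) • C.map (Int.cast : ℤ → ℝ)) s 0) *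
        ((1 : Matrix (Fin n) (Fin n) ℝ) -
          Matrix.updateRow
            ((1 : Matrix (Fin n) (Fin n) ℝ) - (1 / 2 : ℝ) • C.map (Int.cast : ℤ → ℝ)) s 0)⁻¹)) := by
  obtain ⟨hne, hdiag, hoff, D, hDdiag, hDpos, hPD⟩ := hC
  set Cr : Matrix (Fin n) (Fin n) ℝ := C.map (Int.cast : ℤ → ℝ) with hCrdef
  set B : Matrix (Fin n) (Fin n) ℝ := 1 - (1 / 2 : ℝ) • Cr with hBdef
  set Bh : Matrix (Fin n) (Fin n) ℝ := Matrix.updateRow B s 0 with hBhdef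
  have hn : 0 < n := s.pos
  set d : Fin n → ℝ := fun i => D i i with hddef
  have hd : ∀ i, 0 < d i := hDpos
  have hDd : D = diagonal d := hDdiag.diagonal_diag.symm
  set w : Fin n → ℝ := fun i => Real.sqrt (d i) with hwdef
  have hw : ∀ i, 0 < w i := fun i => Real.sqrt_pos.mpr (hd i)
  set w' : Fin n → ℝ := fun i => (w i)⁻¹ with hw'def
  have hw' : ∀ i, 0 < w' i := fun i => inv_pos.mpr (hw i)
  have hww' : ∀ i, w i * w' i = 1 := fun i => mul_inv_cancel₀ (hw i).ne'
  have hw'w : ∀ i, w' i * w i = 1 := fun i => inv_mul_cancel₀ (hw i).ne'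
  have hWW' : diagonal w * diagonal w' = 1 := by
    rw [diagonal_mul_diagonal, ← diagonal_one]
    exact congrArg diagonal (funext hww')
  have hW'W : diagonal w' * diagonal w = 1 := by
    rw [diagonal_mul_diagonal, ← diagonal_one]
    exact congrArg diagonal (funext hw'w)
  have hwsq : ∀ i, w i * w i = d i := fun i => Real.mul_self_sqrt (hd i).le
  set Atil : Matrix (Fin n) (Fin n) ℝ := diagonal w' * (D * Cr) * diagonal w' with hAtildef
  have hAtilPD : Atil.PosDef := posdef_congr hPD fun i => (hw' i).ne'
  have hAtil_entry : ∀ i j, Atil i j = w' i * (d i * Cr i j) * w' j := by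
    intro i j
    rw [hAtildef, mul_diagonal, diagonal_mul, hDd, diagonal_mul]
  have hCr_diag : ∀ i, Cr i i = 2 := by
    intro i
    rw [hCrdef, map_apply, hdiag i]
    norm_num
  have hCr_off : ∀ i j, i ≠ j → Cr i j ≤ 0 := by
    intro i j hij
    rw [hCrdef, map_apply]
    exact_mod_cast hoff i j hij
  have hA2 : ∀ i, Atil i i = 2 := by
    intro i
    rw [hAtil_entry, hCr_diag, ← hwsq, hw'def]
    have hne' : w i * w i ≠ 0 := (mul_pos (hw i) (hw i)).ne'
    field_simp
    exact div_self (hw i).ne'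
  have hAoff : ∀ i j, i ≠ j → Atil i j ≤ 0 := by
    intro i j hij
    rw [hAtil_entry]
    have h1 : d i * Cr i j ≤ 0 :=
      mul_nonpos_iff.mpr (Or.inl ⟨(hd i).le, hCr_off i j hij⟩)
    have h2 : w' i * (d i * Cr i j) ≤ 0 :=
      mul_nonpos_iff.mpr (Or.inl ⟨(hw' i).le, h1⟩)
    exact mul_nonpos_iff.mpr (Or.inr ⟨h2, (hw' j).le⟩)
  set S : Matrix (Fin n) (Fin n) ℝ := 1 - (1 / 2 : ℝ) • Atil with hSdef
  have hS_herm : S.IsHermitian := by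
    show _ᴴ = _
    rw [hSdef, conjTranspose_sub, conjTranspose_smul, conjTranspose_one, hAtilPD.1.eq,
      star_trivial]
  have h1S : ((1 : Matrix (Fin n) (Fin n) ℝ) - S).PosDef := by
    have e : (1 : Matrix (Fin n) (Fin n) ℝ) - S = (1 / 2 : ℝ) • Atil := by
      rw [hSdef, sub_sub_cancel]
    rw [e]
    exact posdef_smul hAtilPD (by norm_num)
  have h2S : ((1 : Matrix (Fin n) (Fin n) ℝ) + S).PosDef := by
    have e : (1 : Matrix (Fin n) (Fin n) ℝ) + S
        = (1 / 2 : ℝ) • ((4 : ℝ) • (1 : Matrix (Fin n) (Fin n) ℝ) - Atil) := by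
      rw [hSdef, smul_sub, smul_smul]
      norm_num
      rw [two_smul]
      abel
    rw [e]
    exact posdef_smul (posdef_four_sub hAtilPD hA2 hAoff) (by norm_num)
  obtain ⟨r, hr0, hr1, hSb⟩ := sym_contraction hn S hS_herm h1S h2S
  set M : Matrix (Fin n) (Fin n) ℝ := Matrix.updateRow S s 0 with hMdef
  have hrow : ∀ x (i : Fin n), (M *ᵥ x) i = if i = s then 0 else (S *ᵥ x) i := by
    intro x i
    by_cases h : i = s
    · subst h
      simp [hMdef, mulVec, updateRow_self, dotProduct]
    · simp [hMdef, mulVec, updateRow_ne h, h]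
  have hMb : ∀ x, (M *ᵥ x) ⬝ᵥ (M *ᵥ x) ≤ r ^ 2 * (x ⬝ᵥ x) := by
    intro x
    refine le_trans ?_ (hSb x)
    unfold dotProduct
    refine Finset.sum_le_sum fun i _ => ?_
    rw [hrow]
    by_cases h : i = s
    · simp only [h, if_pos]
      simpa using mul_self_nonneg ((S *ᵥ x) s)
    · simp [h]
  have hpowb : ∀ (m : ℕ) x, (M ^ m *ᵥ x) ⬝ᵥ (M ^ m *ᵥ x) ≤ (r ^ 2) ^ m * (x ⬝ᵥ x) := by
    intro m
    induction m with
    | zero => intro x; simp [one_mulVec]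
    | succ m ih =>
      intro x
      have e : M ^ (m + 1) *ᵥ x = M ^ m *ᵥ (M *ᵥ x) := by
        rw [mulVec_mulVec, ← pow_succ]
      rw [e]
      calc (M ^ m *ᵥ (M *ᵥ x)) ⬝ᵥ (M ^ m *ᵥ (M *ᵥ x))
          ≤ (r ^ 2) ^ m * ((M *ᵥ x) ⬝ᵥ (M *ᵥ x)) := ih _
        _ ≤ (r ^ 2) ^ m * (r ^ 2 * (x ⬝ᵥ x)) := by
            exact mul_le_mul_of_nonneg_left (hMb x) (pow_nonneg (sq_nonneg r) m)
        _ = (r ^ 2) ^ (m + 1) * (x ⬝ᵥ x) := by ring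
  have hentry : ∀ (m : ℕ) (i j : Fin n), |(M ^ m) i j| ≤ r ^ m := by
    intro m i j
    have h1 := hpowb m (Pi.single j 1)
    have h2 : (Pi.single j 1 : Fin n → ℝ) ⬝ᵥ Pi.single j 1 = 1 := by
      simp [dotProduct, Pi.single_apply]
    have h3 : (M ^ m *ᵥ Pi.single j 1) = fun i => (M ^ m) i j * 1 := mulVec_single _ _ _
    rw [h2, mul_one, h3] at h1
    have h4 : ((M ^ m) i j * 1) * ((M ^ m) i j * 1)
        ≤ ∑ k, ((M ^ m) k j * 1) * ((M ^ m) k j * 1) :=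
      Finset.single_le_sum (f := fun k => ((M ^ m) k j * 1) * ((M ^ m) k j * 1))
        (fun k _ => mul_self_nonneg _) (mem_univ i)
    have h5 : (M ^ m) i j * (M ^ m) i j ≤ (r ^ m) * (r ^ m) := by
      have := le_trans h4 h1
      simp only [mul_one] at this
      calc (M ^ m) i j * (M ^ m) i j ≤ (r ^ 2) ^ m := this
        _ = r ^ m * r ^ m := by ring
    have h6 : |(M ^ m) i j| = Real.sqrt ((M ^ m) i j * (M ^ m) i j) :=
      (Real.sqrt_mul_self_eq_abs _).symm
    rw [h6]
    calc Real.sqrt ((M ^ m) i j * (M ^ m) i j) ≤ Real.sqrt (r ^ m * r ^ m) :=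
        Real.sqrt_le_sqrt h5
      _ = r ^ m := Real.sqrt_mul_self (pow_nonneg hr0 m)
  have hBhM : Bh = diagonal w' * M * diagonal w := by
    ext i j
    rw [mul_diagonal, diagonal_mul]
    by_cases h : i = s
    · subst h
      rw [hBhdef, hMdef, updateRow_self, updateRow_self]
      simp
    · rw [hBhdef, hMdef, updateRow_ne h, updateRow_ne h, hBdef, hSdef]
      simp only [Matrix.sub_apply, Matrix.smul_apply, smul_eq_mul]
      rw [hAtil_entry, ← hwsq]
      have hwi : w i ≠ 0 := (hw i).ne'
      have hwj : w j ≠ 0 := (hw j).ne'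
      by_cases hij : i = j
      · subst hij
        simp only [one_apply_eq, hw'def]
        field_simp
      · simp only [one_apply_ne hij, hw'def]
        field_simp
        ring
  have hBh_pow : ∀ m : ℕ, Bh ^ m = diagonal w' * M ^ m * diagonal w := by
    intro m
    induction m with
    | zero => rw [pow_zero, pow_zero, mul_one, hW'W]
    | succ m ih =>
      rw [pow_succ, ih, hBhM]
      rw [mul_assoc (diagonal w' * M ^ m) (diagonal w) (diagonal w' * M * diagonal w),
        ← mul_assoc (diagonal w) (diagonal w' * M) (diagonal w),
        ← mul_assoc (diagonal w) (diagonal w') M, hWW', one_mul,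
        ← mul_assoc (diagonal w' * M ^ m) M (diagonal w),
        mul_assoc (diagonal w') (M ^ m) M, ← pow_succ]
  have hBh_entry : ∀ (m : ℕ) (i j : Fin n), |(Bh ^ m) i j| ≤ (w' i * w j) * r ^ m := by
    intro m i j
    rw [hBh_pow, mul_diagonal, diagonal_mul, abs_mul, abs_mul, abs_of_pos (hw' i),
      abs_of_pos (hw j)]
    calc w' i * |(M ^ m) i j| * w j ≤ w' i * r ^ m * w j := by
          exact mul_le_mul_of_nonneg_right
            (mul_le_mul_of_nonneg_left (hentry m i j) (hw' i).le) (hw j).le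
      _ = (w' i * w j) * r ^ m := by ring
  have hsum : ∀ i j, Summable fun m : ℕ => (Bh ^ m) i j := by
    intro i j
    refine Summable.of_abs (Summable.of_nonneg_of_le (fun m => abs_nonneg _)
      (fun m => hBh_entry m i j) ?_)
    exact (summable_geometric_of_lt_one hr0 hr1).mul_left _
  set G : Matrix (Fin n) (Fin n) ℝ := Matrix.of fun i j => ∑' m : ℕ, (Bh ^ m) i j with hGdef
  have htendsG : Tendsto (fun N : ℕ => ∑ m ∈ Finset.range N, Bh ^ m) atTop (nhds G) := by
    apply tendsto_pi_nhds.mpr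
    intro i
    rw [tendsto_pi_nhds]
    intro j
    have h1 : ∀ N : ℕ, (∑ m ∈ Finset.range N, Bh ^ m) i j
        = ∑ m ∈ Finset.range N, (Bh ^ m) i j := by
      intro N
      simp [Matrix.sum_apply]
    simp only [h1]
    exact (hsum i j).hasSum.tendsto_sum_nat
  have hpow0 : Tendsto (fun N : ℕ => Bh ^ N) atTop (nhds 0) := by
    apply tendsto_pi_nhds.mpr
    intro i
    rw [tendsto_pi_nhds]
    intro j
    have key : Tendsto (fun N : ℕ => (w' i * w j) * r ^ N) atTop (nhds 0) := by
      have := (tendsto_pow_atTop_nhds_zero_of_lt_one hr0 hr1).const_mul (w' i * w j)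
      simpa using this
    refine squeeze_zero_norm (fun N => ?_) key
    simpa [Real.norm_eq_abs] using hBh_entry N i j
  have T1 : Tendsto (fun N : ℕ => (1 - Bh) * ∑ m ∈ Finset.range N, Bh ^ m) atTop
      (nhds ((1 - Bh) * G)) := Tendsto.mul tendsto_const_nhds htendsG
  have T2 : Tendsto (fun N : ℕ => (1 - Bh) * ∑ m ∈ Finset.range N, Bh ^ m) atTop
      (nhds 1) := by
    simp only [mul_neg_geom_sum]
    have := Tendsto.sub (tendsto_const_nhds (x := (1 : Matrix (Fin n) (Fin n) ℝ))) hpow0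
    simpa using this
  have hmul : (1 - Bh) * G = 1 := tendsto_nhds_unique T1 T2
  have T3 : Tendsto (fun N : ℕ => (∑ m ∈ Finset.range N, Bh ^ m) * (1 - Bh)) atTop
      (nhds (G * (1 - Bh))) := Tendsto.mul htendsG tendsto_const_nhds
  have T4 : Tendsto (fun N : ℕ => (∑ m ∈ Finset.range N, Bh ^ m) * (1 - Bh)) atTop
      (nhds 1) := by
    simp only [geom_sum_mul_neg]
    have := Tendsto.sub (tendsto_const_nhds (x := (1 : Matrix (Fin n) (Fin n) ℝ))) hpow0
    simpa using this
  have hmul' : G * (1 - Bh) = 1 := tendsto_nhds_unique T3 T4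
  have hUnit : IsUnit ((1 : Matrix (Fin n) (Fin n) ℝ) - Bh) := ⟨⟨1 - Bh, G, hmul, hmul'⟩, rfl⟩
  refine ⟨(isUnit_iff_isUnit_det _).mp hUnit, ?_⟩
  have hinv : ((1 : Matrix (Fin n) (Fin n) ℝ) - Bh)⁻¹ = G := inv_eq_right_inv hmul
  rw [hinv]
  have e : (fun N : ℕ => ∑ m ∈ Finset.range N, Bh ^ (m + 1))
      = fun N : ℕ => Bh * ∑ m ∈ Finset.range N, Bh ^ m := by
    funext N
    rw [Finset.mul_sum]
    exact Finset.sum_congr rfl fun m _ => pow_succ' Bh m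
  rw [e]
  exact Tendsto.mul tendsto_const_nhds htendsG
end

section
/- Let C be a finite-type Cartan matrix of size n and set B := I − (1/2)·C. Then C is invertible, the series ∑_{m=0}^∞ B^m converges in the space of n×n real matrices with sum equal to 2·C⁻¹, and consequently every entry of C⁻¹ is nonnegative. -/
open Matrix Filter Finset

namespace CartanInverseAux

variable {n : ℕ}

lemma dot_expand (M : Matrix (Fin n) (Fin n) ℝ) (x : Fin n → ℝ) :
    x ⬝ᵥ (M *ᵥ x) = ∑ i, ∑ j, x i * M i j * x j := by
  simp [dotProduct, mulVec, Finset.mul_sum, mul_assoc]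

lemma posDef_one_add {A : Matrix (Fin n) (Fin n) ℝ} (hA : A.PosDef)
    (hd : ∀ i, A i i = 2) (ho : ∀ i j, i ≠ j → A i j ≤ 0) :
    ((1 : Matrix (Fin n) (Fin n) ℝ) + (1 - (1/2 : ℝ) • A)).PosDef := by
  refine Matrix.PosDef.of_dotProduct_mulVec_pos ?_ ?_
  · show _ᴴ = _
    have h := hA.1.eq
    simp only [conjTranspose_add, conjTranspose_sub, conjTranspose_smul, conjTranspose_one,
      star_trivial, h]
  · intro x hx
    set y : Fin n → ℝ := fun i => |x i| with hy
    have hyne : y ≠ 0 := by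
      intro h
      apply hx
      ext i
      have := congrFun h i
      simpa [hy, abs_eq_zero] using this
    have hpos := hA.dotProduct_mulVec_pos hyne
    rw [show star y = y from funext fun i => star_trivial _] at hpos
    rw [dot_expand] at hpos
    rw [show star x = x from funext fun i => star_trivial _, dot_expand]
    have hentry : ∀ i j, ((1 : Matrix (Fin n) (Fin n) ℝ) + (1 - (1/2 : ℝ) • A)) i j
        = (if i = j then (2:ℝ) else 0) - (1/2) * A i j := by
      intro i j
      by_cases h : i = j <;>
        simp [Matrix.add_apply, Matrix.sub_apply, Matrix.smul_apply, Matrix.one_apply, h] <;> ring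
    have hsum1 : ∑ i, ∑ j, x i * ((1 : Matrix (Fin n) (Fin n) ℝ) + (1 - (1/2 : ℝ) • A)) i j * x j
        = 2 * (∑ i, x i * x i) - (1/2) * ∑ i, ∑ j, x i * A i j * x j := by
      rw [Finset.mul_sum, Finset.mul_sum, ← Finset.sum_sub_distrib]
      refine Finset.sum_congr rfl fun i _ => ?_
      have : ∀ j, x i * ((1 : Matrix (Fin n) (Fin n) ℝ) + (1 - (1/2 : ℝ) • A)) i j * x j
          = (if i = j then 2 * (x i * x i) else 0) - (1/2) * (x i * A i j * x j) := by
        intro j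
        rw [hentry]
        by_cases h : i = j <;> simp [h] <;> ring
      rw [Finset.sum_congr rfl fun j _ => this j, Finset.sum_sub_distrib,
        Finset.sum_ite_eq Finset.univ i (fun j => 2 * (x i * x i))]
      simp [Finset.mul_sum]
    rw [hsum1]
    have key : (∑ i, ∑ j, x i * A i j * x j) + (∑ i, ∑ j, y i * A i j * y j)
        ≤ ∑ i, 4 * (x i * x i) := by
      rw [← Finset.sum_add_distrib]
      refine Finset.sum_le_sum fun i _ => ?_
      rw [← Finset.sum_add_distrib]
      have hterm : ∀ j, x i * A i j * x j + y i * A i j * y j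
          ≤ if j = i then 4 * (x i * x i) else 0 := by
        intro j
        by_cases h : j = i
        · subst h
          have h3 : y j * y j = x j * x j := abs_mul_abs_self _
          rw [if_pos rfl, hd j]
          nlinarith [h3]
        · rw [if_neg h]
          have h1 : A i j ≤ 0 := ho i j (Ne.symm h)
          have h2 : 0 ≤ x i * x j + y i * y j := by
            have h4 : y i * y j = |x i * x j| := by rw [hy]; simp [abs_mul]
            rw [h4]
            nlinarith [neg_abs_le (x i * x j)]
          nlinarith [mul_nonneg (neg_nonneg.2 h1) h2]
      calc ∑ j, (x i * A i j * x j + y i * A i j * y j)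
          ≤ ∑ j, if j = i then 4 * (x i * x i) else 0 :=
            Finset.sum_le_sum fun j _ => hterm j
        _ = 4 * (x i * x i) := by simp
    have hS : ∑ i, 4 * (x i * x i) = 4 * ∑ i, x i * x i := by rw [Finset.mul_sum]
    rw [hS] at key
    linarith

lemma eig_abs_lt_one {B : Matrix (Fin n) (Fin n) ℝ} (hB : B.IsHermitian)
    (h1 : ((1 : Matrix (Fin n) (Fin n) ℝ) - B).PosDef)
    (h2 : ((1 : Matrix (Fin n) (Fin n) ℝ) + B).PosDef) (k : Fin n) :
    |hB.eigenvalues k| < 1 := by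
  set μ : ℝ := hB.eigenvalues k with hμ
  set v : Fin n → ℝ := ⇑(hB.eigenvectorBasis k) with hv
  have hmul : B *ᵥ v = μ • v := hB.mulVec_eigenvectorBasis k
  have hvne : v ≠ 0 := by
    intro h
    exact hB.eigenvectorBasis.orthonormal.ne_zero k (by ext i; exact congrFun h i)
  have hvv : 0 < v ⬝ᵥ v := by
    rcases Function.ne_iff.mp hvne with ⟨i, hi⟩
    refine Finset.sum_pos' (fun j _ => mul_self_nonneg _) ⟨i, Finset.mem_univ i, ?_⟩
    exact mul_self_pos.2 (by simpa using hi)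
  have e1 := h1.dotProduct_mulVec_pos hvne
  have e2 := h2.dotProduct_mulVec_pos hvne
  rw [show star v = v from funext fun i => star_trivial _] at e1 e2
  rw [sub_mulVec, one_mulVec, hmul, dotProduct_sub, dotProduct_smul, smul_eq_mul] at e1
  rw [add_mulVec, one_mulVec, hmul, dotProduct_add, dotProduct_smul, smul_eq_mul] at e2
  rw [abs_lt]
  constructor <;> nlinarith

lemma summable_entries {B : Matrix (Fin n) (Fin n) ℝ} (hB : B.IsHermitian)
    (hμ : ∀ k, |hB.eigenvalues k| < 1) (i j : Fin n) :
    Summable (fun m : ℕ => (B ^ m) i j) := by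
  set U : Matrix (Fin n) (Fin n) ℝ := (hB.eigenvectorUnitary : Matrix (Fin n) (Fin n) ℝ) with hU
  have hUV : U * star U = 1 := Matrix.mem_unitaryGroup_iff.mp hB.eigenvectorUnitary.2
  have hVU : star U * U = 1 := Matrix.mem_unitaryGroup_iff'.mp hB.eigenvectorUnitary.2
  have hspec : B = U * diagonal hB.eigenvalues * star U := by
    have := hB.spectral_theorem
    simpa using this
  have hpow : ∀ m : ℕ, B ^ m = U * diagonal (fun k => hB.eigenvalues k ^ m) * star U := by
    intro m
    induction m with
    | zero =>
      simp only [pow_zero, diagonal_one, Matrix.mul_one, hUV]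
    | succ m ih =>
      have key : (U * diagonal (fun k => hB.eigenvalues k ^ m) * star U)
            * (U * diagonal hB.eigenvalues * star U)
          = U * diagonal (fun k => hB.eigenvalues k ^ (m + 1)) * star U := by
        calc (U * diagonal (fun k => hB.eigenvalues k ^ m) * star U)
              * (U * diagonal hB.eigenvalues * star U)
            = U * diagonal (fun k => hB.eigenvalues k ^ m) * (star U * U)
              * diagonal hB.eigenvalues * star U := by
              simp only [Matrix.mul_assoc]
          _ = U * (diagonal (fun k => hB.eigenvalues k ^ m) * diagonal hB.eigenvalues) * star U := by
              rw [hVU]; simp only [Matrix.mul_assoc, Matrix.mul_one, Matrix.one_mul]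
          _ = U * diagonal (fun k => hB.eigenvalues k ^ (m + 1)) * star U := by
              rw [diagonal_mul_diagonal]
              simp [pow_succ]
      rw [pow_succ, ih,
        show (U * diagonal (fun k => hB.eigenvalues k ^ m) * star U) * B
            = (U * diagonal (fun k => hB.eigenvalues k ^ m) * star U)
              * (U * diagonal hB.eigenvalues * star U) from congrArg _ hspec, key]
  have hentry : ∀ m : ℕ, (B ^ m) i j = ∑ k, (U i k * star U k j) * hB.eigenvalues k ^ m := by
    intro m
    rw [hpow m, Matrix.mul_assoc, mul_apply]
    refine Finset.sum_congr rfl fun k _ => ?_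
    rw [diagonal_mul]
    ring
  rw [show (fun m : ℕ => (B ^ m) i j) = fun m => ∑ k, (U i k * star U k j) * hB.eigenvalues k ^ m
    from funext hentry]
  exact summable_sum fun k _ => (summable_geometric_of_abs_lt_one (hμ k)).mul_left _

end CartanInverseAux

open CartanInverseAux in
/-- Let `C` be a finite-type Cartan matrix of size `n` and set `B := I − (1/2)·C`
(as a real matrix).  Then `C` is invertible, the series `∑_{m=0}^∞ B^m` converges in the space of
`n×n` real matrices with sum equal to `2·C⁻¹`, and consequently every entry of `C⁻¹` is
nonnegative. -/
theorem cartan_inverse_nonneg {n : ℕ}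
    (C : Matrix (Fin n) (Fin n) ℤ) (hC : IsFiniteCartan C) :
    IsUnit (C.map (Int.cast : ℤ → ℝ)).det ∧
    Filter.Tendsto
      (fun N : ℕ => ∑ m ∈ Finset.range N,
        ((1 : Matrix (Fin n) (Fin n) ℝ) - (1 / 2 : ℝ) • C.map (Int.cast : ℤ → ℝ)) ^ m)
      Filter.atTop
      (nhds ((2 : ℝ) • (C.map (Int.cast : ℤ → ℝ))⁻¹)) ∧
    ∀ i j : Fin n, 0 ≤ (C.map (Int.cast : ℤ → ℝ))⁻¹ i j := by
  classical
  obtain ⟨hne, hdiag, hoff, D, hDdiag, hDpos, hposd⟩ := hC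
  set Cr : Matrix (Fin n) (Fin n) ℝ := C.map (Int.cast : ℤ → ℝ) with hCr
  set B : Matrix (Fin n) (Fin n) ℝ := 1 - (1/2 : ℝ) • Cr with hB
  have hCrd : ∀ i, Cr i i = 2 := fun i => by
    rw [hCr]; simp [Matrix.map_apply, hdiag i]
  have hCro : ∀ i j, i ≠ j → Cr i j ≤ 0 := fun i j h => by
    rw [hCr]; simp only [Matrix.map_apply]
    exact_mod_cast hoff i j h
  set e : Fin n → ℝ := fun i => Real.sqrt (D i i) with he
  set f : Fin n → ℝ := fun i => (e i)⁻¹ with hf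
  have hepos : ∀ i, 0 < e i := fun i => Real.sqrt_pos.2 (hDpos i)
  have hfpos : ∀ i, 0 < f i := fun i => by
    simp only [hf]; exact inv_pos.2 (hepos i)
  have hef : ∀ i, e i * f i = 1 := fun i => by
    simp only [hf]; exact mul_inv_cancel₀ (ne_of_gt (hepos i))
  have hfe : ∀ i, f i * e i = 1 := fun i => by rw [mul_comm]; exact hef i
  have hee : ∀ i, e i * e i = D i i := fun i => by
    simp only [he]; exact Real.mul_self_sqrt (le_of_lt (hDpos i))
  have hDC : ∀ i j, (D * Cr) i j = D i i * Cr i j := by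
    intro i j
    rw [mul_apply]
    rw [Finset.sum_eq_single i]
    · intro b _ hb
      rw [hDdiag (Ne.symm hb), zero_mul]
    · intro h; exact absurd (Finset.mem_univ i) h
  have hsymmDC : ∀ i j, D i i * Cr i j = D j j * Cr j i := by
    intro i j
    have h := congrFun (congrFun hposd.1.eq i) j
    rw [conjTranspose_apply, star_trivial] at h
    rw [← hDC, ← hDC, ← h]
  set A : Matrix (Fin n) (Fin n) ℝ := Matrix.of (fun i j => e i * Cr i j * f j) with hA
  have hAij : ∀ i j, A i j = e i * Cr i j * f j := fun i j => rfl
  have hAsymm : ∀ i j, A j i = A i j := by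
    intro i j
    rw [hAij, hAij]
    apply mul_right_cancel₀ (ne_of_gt (mul_pos (hepos i) (hepos j)))
    calc e j * Cr j i * f i * (e i * e j)
        = (e j * e j) * Cr j i * (f i * e i) := by ring
      _ = (e j * e j) * Cr j i := by rw [hfe, mul_one]
      _ = D j j * Cr j i := by rw [hee]
      _ = D i i * Cr i j := (hsymmDC i j).symm
      _ = (e i * e i) * Cr i j := by rw [hee]
      _ = (e i * e i) * Cr i j * (f j * e j) := by rw [hfe, mul_one]
      _ = e i * Cr i j * f j * (e i * e j) := by ring
  have hAherm : A.IsHermitian := by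
    show Aᴴ = A
    ext i j
    rw [conjTranspose_apply, star_trivial]
    exact hAsymm i j
  have hApos : A.PosDef := by
    refine Matrix.PosDef.of_dotProduct_mulVec_pos hAherm fun x hx => ?_
    set y : Fin n → ℝ := fun i => f i * x i with hy
    have hyne : y ≠ 0 := by
      intro h
      apply hx
      ext i
      have h1 := congrFun h i
      simp only [hy, Pi.zero_apply] at h1
      have h2 := congrArg (fun t => e i * t) h1
      simp only [mul_zero] at h2
      rwa [← mul_assoc, hef, one_mul] at h2
    have hp := hposd.dotProduct_mulVec_pos hyne
    rw [show star y = y from funext fun i => star_trivial _] at hp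
    rw [dot_expand] at hp
    rw [show star x = x from funext fun i => star_trivial _, dot_expand]
    have hterm : ∀ i j, y i * (D * Cr) i j * y j = x i * A i j * x j := by
      intro i j
      rw [hDC, hAij]
      simp only [hy]
      have h1 : (f i * x i) * (D i i * Cr i j) * (f j * x j)
          = (f i * e i) * (x i * (e i * Cr i j * f j) * x j) := by
        rw [← hee]; ring
      rw [h1, hfe, one_mul]
    have hsums : ∑ i, ∑ j, y i * (D * Cr) i j * y j = ∑ i, ∑ j, x i * A i j * x j :=
      Finset.sum_congr rfl fun i _ => Finset.sum_congr rfl fun j _ => hterm i j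
    rw [← hsums]
    exact hp
  have hAd : ∀ i, A i i = 2 := by
    intro i
    rw [hAij]
    calc e i * Cr i i * f i = 2 * (e i * f i) := by rw [hCrd]; ring
      _ = 2 := by rw [hef, mul_one]
  have hAo : ∀ i j, i ≠ j → A i j ≤ 0 := by
    intro i j h
    rw [hAij]
    have h1 : Cr i j ≤ 0 := hCro i j h
    nlinarith [mul_nonneg (hepos i).le (hfpos j).le]
  set B' : Matrix (Fin n) (Fin n) ℝ := 1 - (1/2 : ℝ) • A with hB'
  have hB'herm : B'.IsHermitian := by
    show B'ᴴ = B'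
    rw [hB']
    simp only [conjTranspose_sub, conjTranspose_one, conjTranspose_smul, star_trivial,
      hAherm.eq]
  have h1 : ((1 : Matrix (Fin n) (Fin n) ℝ) - B').PosDef := by
    rw [hB', sub_sub_cancel]
    refine Matrix.PosDef.of_dotProduct_mulVec_pos ?_ fun x hx => ?_
    · show _ᴴ = _
      simp only [conjTranspose_smul, star_trivial, hAherm.eq]
    · have hxx := hApos.dotProduct_mulVec_pos hx
      rw [smul_mulVec, dotProduct_smul, smul_eq_mul]
      linarith
  have h2 : ((1 : Matrix (Fin n) (Fin n) ℝ) + B').PosDef := by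
    rw [hB']
    exact posDef_one_add hApos hAd hAo
  have hμ : ∀ k, |hB'herm.eigenvalues k| < 1 := fun k => eig_abs_lt_one hB'herm h1 h2 k
  have hsumB' : ∀ i j, Summable (fun m : ℕ => (B' ^ m) i j) :=
    fun i j => summable_entries hB'herm hμ i j
  have hB'entry : ∀ i j, B' i j = (if i = j then (1:ℝ) else 0) - (1/2) * A i j := by
    intro i j
    rw [hB']
    by_cases h : i = j <;>
      simp [Matrix.sub_apply, Matrix.one_apply, Matrix.smul_apply, h]
  have hBentry : ∀ i j, B i j = (if i = j then (1:ℝ) else 0) - (1/2) * Cr i j := by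
    intro i j
    rw [hB]
    by_cases h : i = j <;>
      simp [Matrix.sub_apply, Matrix.one_apply, Matrix.smul_apply, h]
  have hBB' : ∀ i j, B' i j = e i * B i j * f j := by
    intro i j
    rw [hB'entry, hBentry, hAij]
    by_cases h : i = j
    · subst h
      rw [if_pos rfl]
      linear_combination (-1 : ℝ) * hef i
    · rw [if_neg h]
      ring
  have hpowrel : ∀ m : ℕ, ∀ i j, (B' ^ m) i j = e i * (B ^ m) i j * f j := by
    intro m
    induction m with
    | zero =>
      intro i j
      simp only [pow_zero]
      by_cases h : i = j
      · subst h
        rw [Matrix.one_apply_eq]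
        linear_combination (-1 : ℝ) * hef i
      · rw [Matrix.one_apply_ne h]
        ring
    | succ m ih =>
      intro i j
      rw [pow_succ, pow_succ, mul_apply, mul_apply, Finset.mul_sum, Finset.sum_mul]
      refine Finset.sum_congr rfl fun k _ => ?_
      rw [ih i k, hBB' k j]
      linear_combination (e i * (B ^ m) i k * (B k j) * f j) * hfe k
  have hsumB : ∀ i j, Summable (fun m : ℕ => (B ^ m) i j) := by
    intro i j
    have heq : (fun m : ℕ => (B ^ m) i j) = fun m => f i * ((B' ^ m) i j * e j) := by
      funext m
      rw [hpowrel m i j]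
      linear_combination (-((B ^ m) i j) * (f j * e j)) * hfe i - ((B ^ m) i j) * hfe j
    rw [heq]
    exact ((hsumB' i j).mul_right (e j)).mul_left (f i)
  have hBnn : ∀ i j, (0:ℝ) ≤ B i j := by
    intro i j
    rw [hBentry]
    by_cases h : i = j
    · subst h; rw [if_pos rfl, hCrd]; norm_num
    · rw [if_neg h]; have := hCro i j h; linarith
  have hBmnn : ∀ m : ℕ, ∀ i j, (0:ℝ) ≤ (B ^ m) i j := by
    intro m
    induction m with
    | zero =>
      intro i j
      by_cases h : i = j <;> simp [pow_zero, Matrix.one_apply, h]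
    | succ m ih =>
      intro i j
      rw [pow_succ, mul_apply]
      exact Finset.sum_nonneg fun k _ => mul_nonneg (ih i k) (hBnn k j)
  set S : Matrix (Fin n) (Fin n) ℝ := Matrix.of (fun i j => ∑' m : ℕ, (B ^ m) i j) with hS
  have hSsum : HasSum (fun m : ℕ => B ^ m) S :=
    Pi.hasSum.2 fun i => Pi.hasSum.2 fun j => (hsumB i j).hasSum
  have htend : Tendsto (fun N : ℕ => ∑ m ∈ Finset.range N, B ^ m) atTop (nhds S) :=
    hSsum.tendsto_sum_nat
  have hpow0 : Tendsto (fun N : ℕ => B ^ N) atTop (nhds (0 : Matrix (Fin n) (Fin n) ℝ)) := by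
    apply tendsto_pi_nhds.2
    intro i
    apply tendsto_pi_nhds.2
    intro j
    simpa using (hsumB i j).tendsto_atTop_zero
  have hone : ((1 : Matrix (Fin n) (Fin n) ℝ) - B) * S = 1 := by
    have hc : Continuous fun X : Matrix (Fin n) (Fin n) ℝ => (1 - B) * X :=
      continuous_const.matrix_mul continuous_id
    have t1 : Tendsto (fun N : ℕ => (1 - B) * ∑ m ∈ Finset.range N, B ^ m) atTop
        (nhds ((1 - B) * S)) := (hc.tendsto S).comp htend
    rw [show (fun N : ℕ => (1 - B) * ∑ m ∈ Finset.range N, B ^ m) = fun N => 1 - B ^ N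
      from funext fun N => mul_neg_geom_sum B N] at t1
    have t3 : Tendsto (fun N : ℕ => (1 : Matrix (Fin n) (Fin n) ℝ) - B ^ N) atTop
        (nhds (1 - 0)) := tendsto_const_nhds.sub hpow0
    have h := tendsto_nhds_unique t1 t3
    rwa [sub_zero] at h
  have hone' : S * ((1 : Matrix (Fin n) (Fin n) ℝ) - B) = 1 := by
    have hc : Continuous fun X : Matrix (Fin n) (Fin n) ℝ => X * (1 - B) :=
      continuous_id.matrix_mul continuous_const
    have t1 : Tendsto (fun N : ℕ => (∑ m ∈ Finset.range N, B ^ m) * (1 - B)) atTop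
        (nhds (S * (1 - B))) := (hc.tendsto S).comp htend
    rw [show (fun N : ℕ => (∑ m ∈ Finset.range N, B ^ m) * (1 - B)) = fun N => 1 - B ^ N
      from funext fun N => geom_sum_mul_neg B N] at t1
    have t3 : Tendsto (fun N : ℕ => (1 : Matrix (Fin n) (Fin n) ℝ) - B ^ N) atTop
        (nhds (1 - 0)) := tendsto_const_nhds.sub hpow0
    have h := tendsto_nhds_unique t1 t3
    rwa [sub_zero] at h
  have h12 : (1 : Matrix (Fin n) (Fin n) ℝ) - B = (1/2 : ℝ) • Cr := by
    rw [hB, sub_sub_cancel]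
  have hright : Cr * ((1/2 : ℝ) • S) = 1 := by
    rw [mul_smul_comm, ← smul_mul_assoc, ← h12, hone]
  have hinv : Cr⁻¹ = (1/2 : ℝ) • S := inv_eq_right_inv hright
  refine ⟨Matrix.isUnit_det_of_right_inverse hright, ?_, ?_⟩
  · have h2S : (2 : ℝ) • Cr⁻¹ = S := by
      rw [hinv, smul_smul]; norm_num
    rw [h2S]
    exact htend
  · intro i j
    rw [hinv]
    have hs : ((1/2 : ℝ) • S) i j = (1/2) * S i j := by
      simp [Matrix.smul_apply]
    rw [hs]
    have hSij : (0:ℝ) ≤ S i j := by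
      rw [hS]
      exact tsum_nonneg fun m => hBmnn m i j
    linarith
end

section
/- Let C be a finite-type Cartan matrix of size n. Then in the ring A_C, for every index i ∈ {1,…,n} and every subset J ⊆ {1,…,n}, one has the identity ϖ_i · ϖ_J = ∑_{K ⊆ {1,…,n}} d^K_{i,J} · ϖ_K, where d^K_{i,J} ∈ ℚ[t] is defined by: d^K_{i,J} = [C_K⁻¹]_{i,s}/[C_K⁻¹]_{s,s} if i ∈ K, |K| = |J| + 1 and K \ J = {s}; d^K_{i,J} = 2t·∑_{k∈K}[C_K⁻¹]_{i,k} if i ∈ K and K = J; and d^K_{i,J} = 0 otherwise. -/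
set_option maxHeartbeats 1000000
set_option synthInstance.maxHeartbeats 400000


/-- `[C_K⁻¹]_{i,k}`: the `(i,k)`-entry of the inverse of the principal submatrix of `C` (viewed
as a rational matrix) with rows and columns indexed by `K`, for `i, k ∈ K` (and `0` otherwise). -/
noncomputable def cartanSubInv {n : ℕ} (C : Matrix (Fin n) (Fin n) ℤ) (K : Finset (Fin n))
    (i k : Fin n) : ℚ :=
  if hi : i ∈ K then
    if hk : k ∈ K then
      (((C.map (Int.cast : ℤ → ℚ)).submatrix (Subtype.val : {x // x ∈ K} → Fin n)
          Subtype.val)⁻¹) ⟨i, hi⟩ ⟨k, hk⟩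
    else 0
  else 0

/-- The equivariant structure-constant matrix `D_i`: the `2ⁿ×2ⁿ` matrix over `ℚ[t]`, with rows
and columns indexed by subsets of `{1,…,n}`, whose `(J,K)`-entry is
`[C_K⁻¹]_{i,s}/[C_K⁻¹]_{s,s}` if `i ∈ K`, `|K| = |J|+1` and `K \ J = {s}`;
is `2t·∑_{k∈K}[C_K⁻¹]_{i,k}` if `i ∈ K` and `K = J`; and is `0` otherwise. -/
noncomputable def Dmat {n : ℕ} (C : Matrix (Fin n) (Fin n) ℤ) (i : Fin n) :
    Matrix (Finset (Fin n)) (Finset (Fin n)) (Polynomial ℚ) :=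
  Matrix.of fun J K =>
    if i ∈ K ∧ J ⊆ K ∧ K.card = J.card + 1 then
      Polynomial.C (∑ s ∈ K \ J, cartanSubInv C K i s / cartanSubInv C K s s)
    else if i ∈ K ∧ K = J then
      2 * Polynomial.X * Polynomial.C (∑ k ∈ K, cartanSubInv C K i k)
    else 0

/-- The ideal `I_C ⊆ ℚ[t][x_1,…,x_n]` generated by the polynomials
`∑_{j=1}^n C_{ij}·x_i·x_j − 2t·x_i`, one for each `i`. -/
noncomputable def petIdeal {n : ℕ} (C : Matrix (Fin n) (Fin n) ℤ) :
    Ideal (MvPolynomial (Fin n) (Polynomial ℚ)) :=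
  Ideal.span (Set.range fun i : Fin n =>
    (∑ j : Fin n, MvPolynomial.C ((C i j : Polynomial ℚ)) *
        MvPolynomial.X i * MvPolynomial.X j) -
      MvPolynomial.C (2 * Polynomial.X) * MvPolynomial.X i)

/-- `ϖ_J`: the image in `A_C = ℚ[t][x_1,…,x_n]/I_C` of the monomial `∏_{j∈J} x_j`. -/
noncomputable def petClass {n : ℕ} (C : Matrix (Fin n) (Fin n) ℤ) (J : Finset (Fin n)) :
    MvPolynomial (Fin n) (Polynomial ℚ) ⧸ petIdeal C :=
  Ideal.Quotient.mk (petIdeal C) (∏ j ∈ J, MvPolynomial.X j)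

open Matrix

lemma posdef_submatrix {m l : Type*} [Fintype m] [Fintype l] [DecidableEq m] [DecidableEq l]
    {P : Matrix m m ℝ} (hP : P.PosDef) (e : l → m) (he : Function.Injective e) :
    (P.submatrix e e).PosDef := by
  rw [Matrix.posDef_iff_dotProduct_mulVec]
  constructor
  · have h1 := hP.1
    rw [Matrix.IsHermitian] at h1 ⊢
    ext a b
    have := congrFun (congrFun h1 (e a)) (e b)
    simpa [Matrix.conjTranspose_apply] using this
  · intro x hx
    set x' : m → ℝ := fun j => ∑ a : l, if e a = j then x a else 0 with hx'def
    have hxa : ∀ a : l, x' (e a) = x a := by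
      intro a
      simp only [hx'def, he.eq_iff]
      simp
    have hx0 : x' ≠ 0 := by
      intro h
      apply hx
      funext a
      have := congrFun h (e a)
      rw [hxa] at this
      simpa using this
    have key : star x ⬝ᵥ ((P.submatrix e e) *ᵥ x) = star x' ⬝ᵥ (P *ᵥ x') := by
      have hmv : ∀ j, (P *ᵥ x') j = ∑ b : l, P j (e b) * x b := by
        intro j
        simp only [Matrix.mulVec, dotProduct, hx'def, Finset.mul_sum]
        rw [Finset.sum_comm]
        refine Finset.sum_congr rfl fun b _ => ?_
        rw [Finset.sum_eq_single (e b) (fun c _ hc => by have h' : ¬ e b = c := fun h => hc h.symm; simp [h'])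
          (by simp)]
        simp
      simp only [dotProduct, star_trivial, hmv, hx'def, Finset.sum_mul]
      rw [Finset.sum_comm]
      refine Finset.sum_congr rfl fun a _ => ?_
      rw [Finset.sum_eq_single (e a) (fun c _ hc => by have h' : ¬ e a = c := fun h => hc h.symm; simp [h'])
          (by simp)]
      simp [Matrix.mulVec, dotProduct, Matrix.submatrix_apply, Finset.sum_mul]
      exact Or.inl (hmv (e a)).symm
    rw [key]
    exact hP.dotProduct_mulVec_pos hx0


lemma posdef_diag_pos {m : Type*} [Fintype m] [DecidableEq m] {M : Matrix m m ℝ}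
    (h : M.PosDef) (s : m) : 0 < M s s := by
  have := h.dotProduct_mulVec_pos (x := Pi.single s 1) (by
    intro hh
    have := congrFun hh s
    simp at this)
  simpa [Matrix.mulVec_single, dotProduct, Pi.single_apply, Finset.sum_ite_eq] using this

noncomputable def MQ {n : ℕ} (C : Matrix (Fin n) (Fin n) ℤ) (K : Finset (Fin n)) :
    Matrix {x // x ∈ K} {x // x ∈ K} ℚ :=
  (C.map (Int.cast : ℤ → ℚ)).submatrix Subtype.val Subtype.val


lemma MQ_facts {n : ℕ} {C : Matrix (Fin n) (Fin n) ℤ} (hC : IsFiniteCartan C)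
    (K : Finset (Fin n)) :
    IsUnit (MQ C K).det ∧ ∀ s : {x // x ∈ K}, 0 < ((MQ C K)⁻¹) s s := by
  classical
  obtain ⟨-, -, -, D, hDdiag, hDpos, hDC⟩ := hC
  set e : {x // x ∈ K} → Fin n := Subtype.val with he
  have heinj : Function.Injective e := Subtype.val_injective
  set MR : Matrix {x // x ∈ K} {x // x ∈ K} ℝ :=
    (C.map (Int.cast : ℤ → ℝ)).submatrix e e with hMR
  set E : Matrix {x // x ∈ K} {x // x ∈ K} ℝ := Matrix.diagonal (fun a => D a.1 a.1) with hE
  have hsub : ((D * C.map (Int.cast : ℤ → ℝ)).submatrix e e).PosDef :=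
    posdef_submatrix hDC e heinj
  have hfact : (D * C.map (Int.cast : ℤ → ℝ)).submatrix e e = E * MR := by
    ext a b
    simp only [Matrix.submatrix_apply, Matrix.mul_apply, hE, Matrix.diagonal_apply, hMR]
    rw [Finset.sum_eq_single (e a) (fun c _ hc => by rw [hDdiag (Ne.symm hc), zero_mul])
      (by simp)]
    simp [ite_mul, he]
  rw [hfact] at hsub
  have hEpos : E.PosDef := Matrix.PosDef.diagonal (fun a => hDpos a.1)
  have hdetMR : 0 < MR.det := by
    have h1 : 0 < (E * MR).det := hsub.det_pos
    rw [Matrix.det_mul] at h1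
    have h2 : 0 < E.det := hEpos.det_pos
    nlinarith
  have hcast : (MQ C K).map (Rat.cast : ℚ → ℝ) = MR := by
    ext a b
    simp [MQ, hMR, Matrix.map_apply, he]
  have hdetcast : (((MQ C K).det : ℚ) : ℝ) = MR.det := by
    rw [← hcast]
    exact (RingHom.map_det (Rat.castHom ℝ) (MQ C K)).trans rfl
  have hdetQ : IsUnit (MQ C K).det := by
    rw [isUnit_iff_ne_zero]
    intro h
    rw [h] at hdetcast
    simp at hdetcast
    rw [← hdetcast] at hdetMR
    exact lt_irrefl _ hdetMR
  refine ⟨hdetQ, fun s => ?_⟩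
  have hinvcast : ((MQ C K)⁻¹).map (Rat.cast : ℚ → ℝ) = MR⁻¹ := by
    symm
    apply Matrix.inv_eq_right_inv
    rw [← hcast]
    have h2 : (MQ C K).map (⇑(Rat.castHom ℝ)) * ((MQ C K)⁻¹).map (⇑(Rat.castHom ℝ)) = 1 := by
      rw [← Matrix.map_mul, Matrix.mul_nonsing_inv _ hdetQ]
      simp
    simpa using h2
  have hinvPD : (E * MR)⁻¹.PosDef := hsub.inv
  have hrev : (E * MR)⁻¹ = MR⁻¹ * E⁻¹ := Matrix.mul_inv_rev E MR
  have hEinv : E⁻¹ = Matrix.diagonal (fun a : {x // x ∈ K} => (D a.1 a.1)⁻¹) := by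
    apply Matrix.inv_eq_right_inv
    rw [hE, Matrix.diagonal_mul_diagonal]
    rw [show (fun a : {x // x ∈ K} => D a.1 a.1 * (D a.1 a.1)⁻¹) = fun _ => (1 : ℝ) from
      funext fun a => mul_inv_cancel₀ (hDpos a.1).ne']
    exact Matrix.diagonal_one
  have hdiag : (E * MR)⁻¹ s s = MR⁻¹ s s * (D s.1 s.1)⁻¹ := by
    rw [hrev, hEinv, Matrix.mul_apply]
    rw [Finset.sum_eq_single s (fun c _ hc => by simp [Matrix.diagonal_apply, hc]) (by simp)]
    simp
  have hpos := posdef_diag_pos hinvPD s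
  rw [hdiag] at hpos
  have hMRinv : 0 < MR⁻¹ s s := by
    have hD' : 0 < (D s.1 s.1)⁻¹ := inv_pos.mpr (hDpos s.1)
    nlinarith
  rw [← hinvcast] at hMRinv
  simpa using hMRinv

lemma cartanSubInv_eq {n : ℕ} (C : Matrix (Fin n) (Fin n) ℤ) (K : Finset (Fin n))
    {i k : Fin n} (hi : i ∈ K) (hk : k ∈ K) :
    cartanSubInv C K i k = (MQ C K)⁻¹ ⟨i, hi⟩ ⟨k, hk⟩ := by
  rw [cartanSubInv, dif_pos hi, dif_pos hk]; rfl


lemma cartanSubInv_diag_pos {n : ℕ} {C : Matrix (Fin n) (Fin n) ℤ} (hC : IsFiniteCartan C)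
    {K : Finset (Fin n)} {s : Fin n} (hs : s ∈ K) : 0 < cartanSubInv C K s s := by
  rw [cartanSubInv_eq C K hs hs]
  exact (MQ_facts hC K).2 ⟨s, hs⟩

lemma sum_mul_inv {n : ℕ} {C : Matrix (Fin n) (Fin n) ℤ} (hC : IsFiniteCartan C)
    (K : Finset (Fin n)) {j l : Fin n} (hj : j ∈ K) (hl : l ∈ K) :
    ∑ m ∈ K, ((C j m : ℤ) : ℚ) * cartanSubInv C K m l = if j = l then 1 else 0 := by
  have h := Matrix.mul_nonsing_inv (MQ C K) (MQ_facts hC K).1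
  have h2 := congrFun (congrFun h ⟨j, hj⟩) ⟨l, hl⟩
  rw [Matrix.mul_apply, Matrix.one_apply] at h2
  have h3 : ∑ m : {x // x ∈ K}, (MQ C K) ⟨j, hj⟩ m * (MQ C K)⁻¹ m ⟨l, hl⟩
      = ∑ m ∈ K, ((C j m : ℤ) : ℚ) * cartanSubInv C K m l := by
    rw [← Finset.sum_coe_sort K (fun m => ((C j m : ℤ) : ℚ) * cartanSubInv C K m l)]
    refine Finset.sum_congr rfl fun m _ => ?_
    rw [cartanSubInv_eq C K m.2 hl]
    rfl
  rw [h3] at h2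
  rw [h2]
  by_cases hjl : j = l <;> simp [hjl, Subtype.ext_iff]

lemma sum_inv_mul {n : ℕ} {C : Matrix (Fin n) (Fin n) ℤ} (hC : IsFiniteCartan C)
    (K : Finset (Fin n)) {j l : Fin n} (hj : j ∈ K) (hl : l ∈ K) :
    ∑ m ∈ K, cartanSubInv C K j m * ((C m l : ℤ) : ℚ) = if j = l then 1 else 0 := by
  have h := Matrix.nonsing_inv_mul (MQ C K) (MQ_facts hC K).1
  have h2 := congrFun (congrFun h ⟨j, hj⟩) ⟨l, hl⟩
  rw [Matrix.mul_apply, Matrix.one_apply] at h2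
  have h3 : ∑ m : {x // x ∈ K}, (MQ C K)⁻¹ ⟨j, hj⟩ m * (MQ C K) m ⟨l, hl⟩
      = ∑ m ∈ K, cartanSubInv C K j m * ((C m l : ℤ) : ℚ) := by
    rw [← Finset.sum_coe_sort K (fun m => cartanSubInv C K j m * ((C m l : ℤ) : ℚ))]
    refine Finset.sum_congr rfl fun m _ => ?_
    rw [cartanSubInv_eq C K hj m.2]
    rfl
  rw [h3] at h2
  rw [h2]
  by_cases hjl : j = l <;> simp [hjl, Subtype.ext_iff]

lemma block_ratio {n : ℕ} {C : Matrix (Fin n) (Fin n) ℤ} (hC : IsFiniteCartan C)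
    {J : Finset (Fin n)} {i k : Fin n} (hi : i ∈ J) (hk : k ∉ J) :
    cartanSubInv C (insert k J) i k / cartanSubInv C (insert k J) k k
      = -∑ l ∈ J, cartanSubInv C J i l * ((C l k : ℤ) : ℚ) := by
  classical
  set K : Finset (Fin n) := insert k J with hK
  have hkK : k ∈ K := Finset.mem_insert_self k J
  have hiK : i ∈ K := Finset.mem_insert_of_mem hi
  have hJK : ∀ x ∈ J, x ∈ K := fun x hx => Finset.mem_insert_of_mem hx
  set B := MQ C K with hB
  set u' : Fin n → ℚ := fun x =>
    if x ∈ J then -∑ l ∈ J, cartanSubInv C J x l * ((C l k : ℤ) : ℚ) else 1 with hu'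
  set u : {x // x ∈ K} → ℚ := fun m => u' m.1 with hu
  -- rows indexed by J vanish
  have hrow : ∀ (m : {x // x ∈ K}), m.1 ∈ J → (B *ᵥ u) m = 0 := by
    rintro ⟨j, hjK⟩ hj
    have hBv : (B *ᵥ u) ⟨j, hjK⟩ = ∑ m ∈ K, ((C j m : ℤ) : ℚ) * u' m := by
      rw [Matrix.mulVec, dotProduct,
        ← Finset.sum_coe_sort K (fun m => ((C j m : ℤ) : ℚ) * u' m)]
      rfl
    have hmain : ∑ m ∈ J, ((C j m : ℤ) : ℚ) * u' m = -((C j k : ℤ) : ℚ) := by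
      calc ∑ m ∈ J, ((C j m : ℤ) : ℚ) * u' m
          = ∑ m ∈ J, ∑ l ∈ J,
              -((((C j m : ℤ) : ℚ) * cartanSubInv C J m l) * ((C l k : ℤ) : ℚ)) := by
            refine Finset.sum_congr rfl fun m hm => ?_
            have hum : u' m = -∑ l ∈ J, cartanSubInv C J m l * ((C l k : ℤ) : ℚ) :=
              if_pos hm
            rw [hum, mul_neg, Finset.mul_sum, ← Finset.sum_neg_distrib]
            exact Finset.sum_congr rfl fun l _ => by ring
        _ = ∑ l ∈ J,
              -((∑ m ∈ J, ((C j m : ℤ) : ℚ) * cartanSubInv C J m l) * ((C l k : ℤ) : ℚ)) := by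
            rw [Finset.sum_comm]
            refine Finset.sum_congr rfl fun l _ => ?_
            rw [Finset.sum_mul, ← Finset.sum_neg_distrib]
        _ = ∑ l ∈ J, -((if j = l then (1:ℚ) else 0) * ((C l k : ℤ) : ℚ)) := by
            refine Finset.sum_congr rfl fun l hl => ?_
            rw [sum_mul_inv hC J hj hl]
        _ = -((C j k : ℤ) : ℚ) := by
            have hh : ∀ l ∈ J, -((if j = l then (1:ℚ) else 0) * ((C l k : ℤ) : ℚ))
                = if j = l then -((C l k : ℤ) : ℚ) else 0 := fun l _ => by
              split_ifs <;> simp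
            rw [Finset.sum_congr rfl hh, Finset.sum_ite_eq, if_pos hj]
    have huk : u' k = 1 := if_neg hk
    rw [hBv, hK, Finset.sum_insert hk, huk, hmain]
    ring
  -- the value at row k
  set c : ℚ := (B *ᵥ u) ⟨k, hkK⟩ with hc
  have hBu : B *ᵥ u = Pi.single (⟨k, hkK⟩ : {x // x ∈ K}) c := by
    funext m
    by_cases hm : m = ⟨k, hkK⟩
    · rw [hm, Pi.single_eq_same]
    · have hmJ : m.1 ∈ J := by
        rcases Finset.mem_insert.mp m.2 with h | h
        · exact absurd (Subtype.ext h) hm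
        · exact h
      rw [hrow m hmJ, Pi.single_eq_of_ne hm]
  have hrec : u = fun m => (B⁻¹) m ⟨k, hkK⟩ * c := by
    have h1 : B⁻¹ *ᵥ (B *ᵥ u) = u := by
      rw [Matrix.mulVec_mulVec, Matrix.nonsing_inv_mul B (MQ_facts hC K).1, Matrix.one_mulVec]
    rw [← h1, hBu, Matrix.mulVec_single]
    ext m
    simp
  have hk1 : (1 : ℚ) = (B⁻¹) ⟨k, hkK⟩ ⟨k, hkK⟩ * c := by
    have h2 : u' k = (B⁻¹) ⟨k, hkK⟩ ⟨k, hkK⟩ * c := congrFun hrec ⟨k, hkK⟩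
    rwa [show u' k = 1 from if_neg hk] at h2
  have hi1 : u' i = (B⁻¹) ⟨i, hiK⟩ ⟨k, hkK⟩ * c := congrFun hrec ⟨i, hiK⟩
  rw [cartanSubInv_eq C K hiK hkK, cartanSubInv_eq C K hkK hkK]
  have hkkpos : (0:ℚ) < (B⁻¹) ⟨k, hkK⟩ ⟨k, hkK⟩ := (MQ_facts hC K).2 _
  have hcne : c ≠ 0 := by
    intro h
    rw [h, mul_zero] at hk1
    exact one_ne_zero hk1
  have hkc : (B⁻¹) ⟨k, hkK⟩ ⟨k, hkK⟩ * c = 1 := hk1.symm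
  have hratio : (B⁻¹) ⟨i, hiK⟩ ⟨k, hkK⟩ / (B⁻¹) ⟨k, hkK⟩ ⟨k, hkK⟩ = u' i := by
    rw [hi1, div_eq_iff hkkpos.ne']
    linear_combination (-(B⁻¹ ⟨i, hiK⟩ ⟨k, hkK⟩)) * hkc
  rw [hratio]
  exact if_pos hi

lemma insert_sdiff_eq {n : ℕ} {J : Finset (Fin n)} {k : Fin n} (hk : k ∉ J) :
    insert k J \ J = {k} := by
  ext x
  simp only [Finset.mem_sdiff, Finset.mem_insert, Finset.mem_singleton]
  constructor
  · rintro ⟨h1 | h1, h2⟩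
    · exact h1
    · exact absurd h1 h2
  · rintro rfl
    exact ⟨Or.inl rfl, hk⟩

lemma Dmat_apply {n : ℕ} (C : Matrix (Fin n) (Fin n) ℤ) (i : Fin n) (J K : Finset (Fin n)) :
    Dmat C i J K =
      if i ∈ K ∧ J ⊆ K ∧ K.card = J.card + 1 then
        Polynomial.C (∑ s ∈ K \ J, cartanSubInv C K i s / cartanSubInv C K s s)
      else if i ∈ K ∧ K = J then
        2 * Polynomial.X * Polynomial.C (∑ k ∈ K, cartanSubInv C K i k)
      else 0 := rfl

noncomputable def psiC {n : ℕ} : ℚ →+* MvPolynomial (Fin n) (Polynomial ℚ) :=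
  (MvPolynomial.C).comp (Polynomial.C)

lemma psiC_int {n : ℕ} (C : Matrix (Fin n) (Fin n) ℤ) (a b : Fin n) :
    (MvPolynomial.C ((C a b : Polynomial ℚ)) : MvPolynomial (Fin n) (Polynomial ℚ))
      = psiC ((C a b : ℤ) : ℚ) := by
  rw [psiC, RingHom.comp_apply, map_intCast (Polynomial.C : ℚ →+* Polynomial ℚ)]

/-- the generator of the Peterson ideal attached to index `l` -/
noncomputable def petGen {n : ℕ} (C : Matrix (Fin n) (Fin n) ℤ) (l : Fin n) :
    MvPolynomial (Fin n) (Polynomial ℚ) :=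
  (∑ j : Fin n, MvPolynomial.C ((C l j : Polynomial ℚ)) *
      MvPolynomial.X l * MvPolynomial.X j) -
    MvPolynomial.C (2 * Polynomial.X) * MvPolynomial.X l

lemma petGen_mem {n : ℕ} (C : Matrix (Fin n) (Fin n) ℤ) (l : Fin n) :
    petGen C l ∈ petIdeal C :=
  Ideal.subset_span ⟨l, rfl⟩

lemma main_poly_identity {n : ℕ} {C : Matrix (Fin n) (Fin n) ℤ} (hC : IsFiniteCartan C)
    {i : Fin n} {J : Finset (Fin n)} (hiJ : i ∈ J) :
    MvPolynomial.X i * ∏ x ∈ J, MvPolynomial.X x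
      - (MvPolynomial.C (Dmat C i J J) * ∏ x ∈ J, MvPolynomial.X x
         + ∑ k ∈ Jᶜ, MvPolynomial.C (Dmat C i J (insert k J)) *
             ∏ x ∈ insert k J, MvPolynomial.X x)
      = ∑ l ∈ J, (psiC (cartanSubInv C J i l) * ∏ x ∈ J.erase l, MvPolynomial.X x) *
          petGen C l := by
  classical
  set m : MvPolynomial (Fin n) (Polynomial ℚ) := ∏ x ∈ J, MvPolynomial.X x with hm
  -- step 1: expand each generator term
  have hstep1 : ∀ l ∈ J,
      (psiC (cartanSubInv C J i l) * ∏ x ∈ J.erase l, MvPolynomial.X x) * petGen C l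
      = (∑ j : Fin n, psiC (cartanSubInv C J i l) * psiC ((C l j : ℤ) : ℚ) *
            (MvPolynomial.X j * m))
        - psiC (cartanSubInv C J i l) * (MvPolynomial.C (2 * Polynomial.X) * m) := by
    intro l hl
    have hXl : MvPolynomial.X l * ∏ x ∈ J.erase l, MvPolynomial.X x = m :=
      Finset.mul_prod_erase J _ hl
    rw [petGen, mul_sub, Finset.mul_sum]
    refine congrArg₂ (· - ·) ?_ ?_
    · refine Finset.sum_congr rfl fun j _ => ?_
      rw [psiC_int C l j, ← hXl]
      ring
    · rw [← hXl]
      ring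
  rw [Finset.sum_congr rfl hstep1, Finset.sum_sub_distrib, ← Finset.sum_mul]
  -- step 2: handle the double sum
  have hstep2 : ∑ l ∈ J, ∑ j : Fin n, psiC (cartanSubInv C J i l) * psiC ((C l j : ℤ) : ℚ) *
      (MvPolynomial.X j * m)
      = MvPolynomial.X i * m
        + ∑ k ∈ Jᶜ, psiC (∑ l ∈ J, cartanSubInv C J i l * ((C l k : ℤ) : ℚ)) *
            (MvPolynomial.X k * m) := by
    rw [Finset.sum_comm]
    have hswap : ∀ j : Fin n, ∑ l ∈ J, psiC (cartanSubInv C J i l) * psiC ((C l j : ℤ) : ℚ) *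
        (MvPolynomial.X j * m)
        = psiC (∑ l ∈ J, cartanSubInv C J i l * ((C l j : ℤ) : ℚ)) * (MvPolynomial.X j * m) := by
      intro j
      rw [map_sum psiC _ J, Finset.sum_mul]
      refine Finset.sum_congr rfl fun l _ => ?_
      rw [_root_.map_mul]
    rw [Finset.sum_congr rfl (fun j _ => hswap j),
      ← Finset.sum_add_sum_compl J (fun j => psiC (∑ l ∈ J, cartanSubInv C J i l *
        ((C l j : ℤ) : ℚ)) * (MvPolynomial.X j * m))]
    congr 1
    have hdelta : ∀ j ∈ J, psiC (∑ l ∈ J, cartanSubInv C J i l * ((C l j : ℤ) : ℚ)) *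
        (MvPolynomial.X j * m)
        = psiC (if i = j then 1 else 0) * (MvPolynomial.X j * m) := by
      intro j hj
      rw [sum_inv_mul hC J hiJ hj]
    rw [Finset.sum_congr rfl hdelta,
      Finset.sum_eq_single i
        (fun b _ hb => by rw [if_neg (fun h => hb h.symm), _root_.map_zero, zero_mul])
        (fun h => absurd hiJ h), if_pos rfl, _root_.map_one, one_mul]
  rw [hstep2]
  -- step 3: evaluate the Dmat entries
  have hDJ : (MvPolynomial.C (Dmat C i J J) : MvPolynomial (Fin n) (Polynomial ℚ))
      = MvPolynomial.C (2 * Polynomial.X) * psiC (∑ k ∈ J, cartanSubInv C J i k) := by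
    rw [Dmat_apply, if_neg (by rintro ⟨-, -, hc⟩; omega), if_pos ⟨hiJ, rfl⟩, _root_.map_mul]
    rfl
  have hDK : ∀ k ∈ Jᶜ, MvPolynomial.C (Dmat C i J (insert k J)) *
      ∏ x ∈ insert k J, MvPolynomial.X x
      = -(psiC (∑ l ∈ J, cartanSubInv C J i l * ((C l k : ℤ) : ℚ)) *
          (MvPolynomial.X k * m)) := by
    intro k hk
    have hknJ : k ∉ J := Finset.mem_compl.mp hk
    have hD : Dmat C i J (insert k J)
        = Polynomial.C (cartanSubInv C (insert k J) i k / cartanSubInv C (insert k J) k k) := by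
      rw [Dmat_apply, if_pos ⟨Finset.mem_insert_of_mem hiJ, Finset.subset_insert k J,
        Finset.card_insert_of_notMem hknJ⟩, insert_sdiff_eq hknJ, Finset.sum_singleton]
    rw [hD, block_ratio hC hiJ hknJ, Finset.prod_insert hknJ]
    have : (MvPolynomial.C (Polynomial.C (-∑ l ∈ J, cartanSubInv C J i l * ((C l k : ℤ) : ℚ)))
        : MvPolynomial (Fin n) (Polynomial ℚ))
        = -psiC (∑ l ∈ J, cartanSubInv C J i l * ((C l k : ℤ) : ℚ)) := by
      rw [show (psiC (∑ l ∈ J, cartanSubInv C J i l * ((C l k : ℤ) : ℚ))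
          : MvPolynomial (Fin n) (Polynomial ℚ))
        = MvPolynomial.C (Polynomial.C (∑ l ∈ J, cartanSubInv C J i l * ((C l k : ℤ) : ℚ)))
          from rfl, ← _root_.map_neg, ← _root_.map_neg]
    rw [this]
    ring
  rw [Finset.sum_congr rfl hDK, hDJ, Finset.sum_neg_distrib, map_sum psiC _ J]
  ring

/-- in the ring `A_C`, for every index `i` and every subset `J`, one has
`ϖ_i · ϖ_J = ∑_{K ⊆ {1,…,n}} d^K_{i,J} · ϖ_K`, where `d^K_{i,J}` is the `(J,K)`-entry of the
equivariant structure-constant matrix `D_i`. -/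
theorem peterson_monk_rule {n : ℕ} (C : Matrix (Fin n) (Fin n) ℤ) (hC : IsFiniteCartan C)
    (i : Fin n) (J : Finset (Fin n)) :
    petClass C {i} * petClass C J =
      ∑ K : Finset (Fin n),
        Ideal.Quotient.mk (petIdeal C) (MvPolynomial.C (Dmat C i J K)) * petClass C K := by
  classical
  simp only [petClass]
  by_cases hiJ : i ∈ J
  · -- case i ∈ J
    have hJnotmem : J ∉ Jᶜ.image (fun k => insert k J) := by
      intro h
      obtain ⟨k, hk, hkeq⟩ := Finset.mem_image.mp h
      exact (Finset.mem_compl.mp hk) (hkeq ▸ Finset.mem_insert_self k J)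
    have hzero : ∀ K ∈ (Finset.univ : Finset (Finset (Fin n))),
        K ∉ insert J (Jᶜ.image (fun k => insert k J)) →
        Ideal.Quotient.mk (petIdeal C) (MvPolynomial.C (Dmat C i J K)) *
          Ideal.Quotient.mk (petIdeal C) (∏ j ∈ K, MvPolynomial.X j) = 0 := by
      intro K _ hK
      have hD : Dmat C i J K = 0 := by
        rw [Dmat_apply]
        split_ifs with h1 h2
        · exfalso
          have h4 : (K \ J).card = 1 := by
            rw [Finset.card_sdiff_of_subset h1.2.1, h1.2.2]
            omega
          obtain ⟨s, hs⟩ := Finset.card_eq_one.mp h4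
          have hsK : s ∈ K \ J := hs ▸ Finset.mem_singleton_self s
          have hKeq : K = insert s J := by
            ext x
            simp only [Finset.mem_insert]
            constructor
            · intro hx
              by_cases hxJ : x ∈ J
              · exact Or.inr hxJ
              · left
                have hx2 : x ∈ K \ J := Finset.mem_sdiff.mpr ⟨hx, hxJ⟩
                rw [hs] at hx2
                exact Finset.mem_singleton.mp hx2
            · rintro (rfl | hx)
              · exact (Finset.mem_sdiff.mp hsK).1
              · exact h1.2.1 hx
          apply hK
          apply Finset.mem_insert_of_mem
          exact Finset.mem_image.mpr
            ⟨s, Finset.mem_compl.mpr (Finset.mem_sdiff.mp hsK).2, hKeq.symm⟩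
        · exact absurd (by rw [h2.2]; exact Finset.mem_insert_self J _) hK
        · rfl
      rw [hD, ← _root_.map_mul (Ideal.Quotient.mk (petIdeal C))]
      exact Ideal.Quotient.eq_zero_iff_mem.mpr (by simp)
    have hsupp : ∑ K : Finset (Fin n),
        Ideal.Quotient.mk (petIdeal C) (MvPolynomial.C (Dmat C i J K)) *
          Ideal.Quotient.mk (petIdeal C) (∏ j ∈ K, MvPolynomial.X j)
        = Ideal.Quotient.mk (petIdeal C) (MvPolynomial.C (Dmat C i J J)) *
            Ideal.Quotient.mk (petIdeal C) (∏ j ∈ J, MvPolynomial.X j)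
          + ∑ k ∈ Jᶜ,
              Ideal.Quotient.mk (petIdeal C) (MvPolynomial.C (Dmat C i J (insert k J))) *
                Ideal.Quotient.mk (petIdeal C) (∏ j ∈ insert k J, MvPolynomial.X j) := by
      rw [← Finset.sum_subset (Finset.subset_univ (insert J (Jᶜ.image (fun k => insert k J))))
        hzero]
      rw [Finset.sum_insert hJnotmem, Finset.sum_image
        (fun a ha b hb hab => by
          rcases Finset.mem_insert.mp (hab ▸ Finset.mem_insert_self a J) with h | h
          · exact h
          · exact absurd h (Finset.mem_compl.mp ha))]
    rw [hsupp]
    have e2 : Ideal.Quotient.mk (petIdeal C)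
        (MvPolynomial.C (Dmat C i J J) * ∏ j ∈ J, MvPolynomial.X j
          + ∑ k ∈ Jᶜ, MvPolynomial.C (Dmat C i J (insert k J)) *
              ∏ j ∈ insert k J, MvPolynomial.X j)
        = Ideal.Quotient.mk (petIdeal C) (MvPolynomial.C (Dmat C i J J)) *
            Ideal.Quotient.mk (petIdeal C) (∏ j ∈ J, MvPolynomial.X j)
          + ∑ k ∈ Jᶜ,
              Ideal.Quotient.mk (petIdeal C) (MvPolynomial.C (Dmat C i J (insert k J))) *
                Ideal.Quotient.mk (petIdeal C) (∏ j ∈ insert k J, MvPolynomial.X j) := by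
      rw [_root_.map_add (Ideal.Quotient.mk (petIdeal C)),
        _root_.map_mul (Ideal.Quotient.mk (petIdeal C)),
        map_sum (Ideal.Quotient.mk (petIdeal C)) _ Jᶜ]
      exact congrArg₂ (· + ·) rfl (Finset.sum_congr rfl fun k _ =>
        _root_.map_mul (Ideal.Quotient.mk (petIdeal C)) _ _)
    rw [← e2, Finset.prod_singleton, ← _root_.map_mul (Ideal.Quotient.mk (petIdeal C))]
    refine Ideal.Quotient.eq.mpr ?_
    rw [main_poly_identity hC hiJ]
    exact Ideal.sum_mem _ fun l hl => Ideal.mul_mem_left _ _ (petGen_mem C l)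
  · -- case i ∉ J
    have hD1 : Dmat C i J (insert i J) = 1 := by
      rw [Dmat_apply]
      rw [if_pos ⟨Finset.mem_insert_self i J, Finset.subset_insert i J,
        Finset.card_insert_of_notMem hiJ⟩, insert_sdiff_eq hiJ, Finset.sum_singleton,
        div_self (cartanSubInv_diag_pos hC (Finset.mem_insert_self i J)).ne', _root_.map_one]
    have hD0 : ∀ K, K ≠ insert i J → Dmat C i J K = 0 := by
      intro K hne
      rw [Dmat_apply]
      split_ifs with h1 h2
      · exfalso
        have hsub : insert i J ⊆ K := Finset.insert_subset h1.1 h1.2.1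
        have hcard : K.card ≤ (insert i J).card := by
          rw [Finset.card_insert_of_notMem hiJ, h1.2.2]
        exact hne ((Finset.eq_of_subset_of_card_le hsub hcard).symm)
      · exact absurd (h2.2 ▸ h2.1) hiJ
      · rfl
    rw [Finset.sum_eq_single (insert i J)
      (fun K _ hK => by
        rw [hD0 K hK, ← _root_.map_mul (Ideal.Quotient.mk (petIdeal C))]
        exact Ideal.Quotient.eq_zero_iff_mem.mpr (by simp))
      (fun h => absurd (Finset.mem_univ _) h),
      ← _root_.map_mul (Ideal.Quotient.mk (petIdeal C)),
      ← _root_.map_mul (Ideal.Quotient.mk (petIdeal C))]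
    exact congrArg _ (by
      rw [hD1, _root_.map_one, one_mul, Finset.prod_singleton, ← Finset.prod_insert hiJ])
end

section
/- Let C be a finite-type Cartan matrix of size n. For I ⊆ {1,…,n} with increasing enumeration I = {i_1 < i_2 < … < i_l}, write ϖ_I for the corresponding monomial class in A⁰_C and M_{i_1}, …, M_{i_l} for the non-equivariant structure-constant matrices. Then for all subsets I, J ⊆ {1,…,n}, in the ring A⁰_C one has ϖ_I · ϖ_J = ∑_{K ⊆ {1,…,n}} [M_{i_1}·M_{i_2}···M_{i_l}]_{(J,K)} · ϖ_K, where [ · ]_{(J,K)} denotes the entry in row J and column K of the indicated product of matrices (for I = ∅ the empty product is the identity matrix). -/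
/-- The non-equivariant structure-constant matrix `M_i`: the `2ⁿ×2ⁿ` rational matrix, with rows
and columns indexed by subsets of `{1,…,n}`, whose `(J,K)`-entry is
`[C_K⁻¹]_{i,s}/[C_K⁻¹]_{s,s}` if `i ∈ K`, `|K| = |J|+1` and `K \ J = {s}`, and `0` otherwise. -/
noncomputable def Mmat {n : ℕ} (C : Matrix (Fin n) (Fin n) ℤ) (i : Fin n) :
    Matrix (Finset (Fin n)) (Finset (Fin n)) ℚ :=
  Matrix.of fun J K =>
    if i ∈ K ∧ J ⊆ K ∧ K.card = J.card + 1 then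
      ∑ s ∈ K \ J, cartanSubInv C K i s / cartanSubInv C K s s
    else 0

/-- The ideal `I⁰_C ⊆ ℚ[x_1,…,x_n]` generated by the polynomials
`∑_{j=1}^n C_{ij}·x_i·x_j`, one for each `i`. -/
noncomputable def petIdeal₀ {n : ℕ} (C : Matrix (Fin n) (Fin n) ℤ) :
    Ideal (MvPolynomial (Fin n) ℚ) :=
  Ideal.span (Set.range fun i : Fin n =>
    ∑ j : Fin n, MvPolynomial.C ((C i j : ℚ)) * MvPolynomial.X i * MvPolynomial.X j)

/-- `ϖ_J`: the image in `A⁰_C = ℚ[x_1,…,x_n]/I⁰_C` of the monomial `∏_{j∈J} x_j`. -/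
noncomputable def petClass₀ {n : ℕ} (C : Matrix (Fin n) (Fin n) ℤ) (J : Finset (Fin n)) :
    MvPolynomial (Fin n) ℚ ⧸ petIdeal₀ C :=
  Ideal.Quotient.mk (petIdeal₀ C) (∏ j ∈ J, MvPolynomial.X j)





open Matrix

lemma sum_extend_mul {m N : Type*} [Fintype m] [Fintype N] [DecidableEq N]
    (e : m → N) (he : Function.Injective e) (x : m → ℝ) (g : N → ℝ) :
    ∑ j, Function.extend e x 0 j * g j = ∑ a, x a * g (e a) := by
  have h1 : ∑ a, x a * g (e a) = ∑ j ∈ Finset.univ.image e,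
      Function.extend e x 0 j * g j := by
    rw [Finset.sum_image (fun a _ b _ h => he h)]
    refine Finset.sum_congr rfl fun a _ => ?_
    rw [he.extend_apply]
  rw [h1]
  refine (Finset.sum_subset (Finset.subset_univ _) fun j _ hj => ?_).symm
  have : ∀ a, e a ≠ j := by
    intro a ha
    exact hj (Finset.mem_image.2 ⟨a, Finset.mem_univ _, ha⟩)
  rw [Function.extend_apply' _ _ _ (fun ⟨a, ha⟩ => this a ha)]
  simp

lemma posDef_submatrix {m N : Type*} [Fintype m] [Fintype N] [DecidableEq N]
    {M : Matrix N N ℝ} (hM : M.PosDef) (e : m → N) (he : Function.Injective e) :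
    (M.submatrix e e).PosDef := by
  refine Matrix.PosDef.of_dotProduct_mulVec_pos ?_ ?_
  · have h := hM.1
    unfold Matrix.IsHermitian at h ⊢
    rw [Matrix.conjTranspose_submatrix, h]
  · intro x hx
    set y : N → ℝ := Function.extend e x 0 with hy
    have hy0 : y ≠ 0 := by
      obtain ⟨a, ha⟩ := Function.ne_iff.1 hx
      refine Function.ne_iff.2 ⟨e a, ?_⟩
      simpa [hy, he.extend_apply] using ha
    have := hM.dotProduct_mulVec_pos hy0
    have key : dotProduct (star y) (M *ᵥ y) = dotProduct (star x) ((M.submatrix e e) *ᵥ x) := by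
      simp only [star_trivial, dotProduct, mulVec, dotProduct]
      rw [sum_extend_mul e he x]
      refine Finset.sum_congr rfl fun a _ => ?_
      congr 1
      rw [show ∀ w : N → ℝ, ∑ k, M (e a) k * w k = ∑ k, w k * M (e a) k from
        fun w => Finset.sum_congr rfl fun k _ => mul_comm _ _]
      rw [sum_extend_mul e he x]
      simp [mul_comm, submatrix_apply]
    rw [key] at this
    exact this


namespace PetAux

variable {n : ℕ} (C : Matrix (Fin n) (Fin n) ℤ)

/-- Principal submatrix over ℚ. -/
noncomputable def SQ (K : Finset (Fin n)) : Matrix {x // x ∈ K} {x // x ∈ K} ℚ :=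
  (C.map (Int.cast : ℤ → ℚ)).submatrix Subtype.val Subtype.val

/-- Principal submatrix over ℝ. -/
noncomputable def SR (K : Finset (Fin n)) : Matrix {x // x ∈ K} {x // x ∈ K} ℝ :=
  (C.map (Int.cast : ℤ → ℝ)).submatrix Subtype.val Subtype.val

lemma SR_eq_map (K : Finset (Fin n)) : SR C K = (SQ C K).map (Rat.cast : ℚ → ℝ) := by
  ext a b
  simp [SR, SQ, Matrix.submatrix_apply, Matrix.map_apply]

lemma posDef_diag_pos {m : Type*} [Fintype m] [DecidableEq m] {M : Matrix m m ℝ}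
    (hM : M.PosDef) (a : m) : 0 < M a a := by
  have := hM.dotProduct_mulVec_pos (x := Pi.single a 1) (by
    intro h
    have := congrFun h a
    simp at this)
  simpa [dotProduct, mulVec, Pi.single_apply, Finset.sum_ite_eq', mul_comm] using this

variable {C}

lemma exists_posDef (hC : IsFiniteCartan C) (K : Finset (Fin n)) :
    ∃ d : {x // x ∈ K} → ℝ, (∀ a, 0 < d a) ∧ (Matrix.diagonal d * SR C K).PosDef := by
  obtain ⟨-, -, -, D, hdiag, hdpos, hpd⟩ := hC
  refine ⟨fun a => D a a, fun a => hdpos _, ?_⟩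
  have h := posDef_submatrix hpd (Subtype.val : {x // x ∈ K} → Fin n) Subtype.val_injective
  have hD : D = Matrix.diagonal D.diag := hdiag.diagonal_diag.symm
  convert h using 1
  ext a b
  rw [Matrix.diagonal_mul, Matrix.submatrix_apply, hD, Matrix.diagonal_mul]
  simp [SR, Matrix.submatrix_apply]

lemma det_SR_ne_zero (hC : IsFiniteCartan C) (K : Finset (Fin n)) : (SR C K).det ≠ 0 := by
  obtain ⟨d, hd, hpd⟩ := exists_posDef hC K
  have h := hpd.det_pos
  rw [Matrix.det_mul, Matrix.det_diagonal] at h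
  have hprod : 0 < ∏ a, d a := Finset.prod_pos fun a _ => hd a
  intro h0
  rw [h0, mul_zero] at h
  exact lt_irrefl _ h

lemma isUnit_det_SQ (hC : IsFiniteCartan C) (K : Finset (Fin n)) : IsUnit (SQ C K).det := by
  have h1 : (((SQ C K).det : ℚ) : ℝ) ≠ 0 := by
    rw [show (((SQ C K).det : ℚ) : ℝ) = ((SQ C K).map (Rat.cast : ℚ → ℝ)).det from
      RingHom.map_det (Rat.castHom ℝ) _, ← SR_eq_map]
    exact det_SR_ne_zero hC K
  exact isUnit_iff_ne_zero.2 fun h => h1 (by rw [h]; simp)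

lemma inv_SR_eq (hC : IsFiniteCartan C) (K : Finset (Fin n)) :
    (SR C K)⁻¹ = ((SQ C K)⁻¹).map (Rat.cast : ℚ → ℝ) := by
  refine Matrix.inv_eq_left_inv ?_
  rw [SR_eq_map]
  have hc : (Rat.cast : ℚ → ℝ) = ⇑(Rat.castHom ℝ) := rfl
  rw [hc]
  have h1 : ((SQ C K)⁻¹).map ⇑(Rat.castHom ℝ) * (SQ C K).map ⇑(Rat.castHom ℝ)
      = ((SQ C K)⁻¹ * SQ C K).map ⇑(Rat.castHom ℝ) := (Matrix.map_mul).symm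
  rw [h1, Matrix.nonsing_inv_mul _ (isUnit_det_SQ hC K)]
  simp

lemma inv_SQ_diag_pos (hC : IsFiniteCartan C) (K : Finset (Fin n)) (a : {x // x ∈ K}) :
    0 < (SQ C K)⁻¹ a a := by
  obtain ⟨d, hd, hpd⟩ := exists_posDef hC K
  have hinv := hpd.inv
  have h1 : (Matrix.diagonal d * SR C K)⁻¹ a a = (SR C K)⁻¹ a a * (d a)⁻¹ := by
    have hdiaginv : (Matrix.diagonal d)⁻¹ = Matrix.diagonal (fun a => (d a)⁻¹) := by
      refine Matrix.inv_eq_left_inv ?_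
      rw [Matrix.diagonal_mul_diagonal]
      have hfun : (fun a => (d a)⁻¹ * d a) = fun _ => 1 :=
        funext fun a => inv_mul_cancel₀ (hd a).ne'
      rw [hfun, Matrix.diagonal_one]
    rw [Matrix.mul_inv_rev, hdiaginv, Matrix.mul_diagonal]
  have h2 : 0 < (SR C K)⁻¹ a a := by
    have := posDef_diag_pos hinv a
    rw [h1] at this
    have hda := hd a
    nlinarith [mul_pos this hda, inv_pos.2 hda]
  rw [inv_SR_eq hC K] at h2
  rw [Matrix.map_apply] at h2
  exact_mod_cast h2


lemma csi_apply {K : Finset (Fin n)} {i k : Fin n} (hi : i ∈ K) (hk : k ∈ K) :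
    cartanSubInv C K i k = (SQ C K)⁻¹ ⟨i, hi⟩ ⟨k, hk⟩ := by
  rw [cartanSubInv, dif_pos hi, dif_pos hk]
  rfl

lemma csi_diag_pos (hC : IsFiniteCartan C) {K : Finset (Fin n)} {s : Fin n} (hs : s ∈ K) :
    0 < cartanSubInv C K s s := by
  rw [csi_apply hs hs]
  exact inv_SQ_diag_pos hC K _

lemma inv_mul_sum (hC : IsFiniteCartan C) {K : Finset (Fin n)} {i k : Fin n}
    (hi : i ∈ K) (hk : k ∈ K) :
    ∑ j ∈ K, cartanSubInv C K i j * (C j k : ℚ) = if i = k then 1 else 0 := by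
  have h := Matrix.nonsing_inv_mul (SQ C K) (isUnit_det_SQ hC K)
  have h2 := congrFun (congrFun h ⟨i, hi⟩) ⟨k, hk⟩
  rw [Matrix.mul_apply] at h2
  rw [← Finset.sum_attach K (fun j => cartanSubInv C K i j * (C j k : ℚ))]
  have h3 : ∑ j ∈ K.attach, cartanSubInv C K i ↑j * (C ↑j k : ℚ)
      = ∑ j : {x // x ∈ K}, (SQ C K)⁻¹ ⟨i, hi⟩ j * SQ C K j ⟨k, hk⟩ := by
    rw [Finset.univ_eq_attach]
    refine Finset.sum_congr rfl fun j _ => ?_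
    rw [csi_apply hi j.2]
    simp [SQ, Matrix.submatrix_apply, Matrix.map_apply]
  rw [h3, h2, Matrix.one_apply]
  simp [Subtype.mk_eq_mk]


variable (C)

/-- Row `i` of the candidate inverse of the principal submatrix on `J`, obtained from the
inverse on `K = insert s J` by the standard one-row/column deletion formula. -/
noncomputable def erow (K : Finset (Fin n)) (i s j : Fin n) : ℚ :=
  cartanSubInv C K i j - cartanSubInv C K i s * cartanSubInv C K s j / cartanSubInv C K s s

variable {C}

lemma erow_self (hC : IsFiniteCartan C) {K : Finset (Fin n)} {i s : Fin n}
    (hs : s ∈ K) : erow C K i s s = 0 := by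
  have h := (csi_diag_pos hC hs).ne'
  rw [erow]
  field_simp
  ring

lemma erow_sum (hC : IsFiniteCartan C) {J : Finset (Fin n)} {s : Fin n} (hs : s ∉ J)
    {i k : Fin n} (hi : i ∈ J) (hk : k ∈ insert s J) :
    ∑ j ∈ insert s J, erow C (insert s J) i s j * (C j k : ℚ)
      = (if i = k then 1 else 0)
        - cartanSubInv C (insert s J) i s / cartanSubInv C (insert s J) s s
          * (if s = k then 1 else 0) := by
  set K := insert s J with hK
  have hiK : i ∈ K := Finset.mem_insert_of_mem hi
  have hsK : s ∈ K := Finset.mem_insert_self s J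
  have hd : ∀ j ∈ K, erow C K i s j * (C j k : ℚ)
      = cartanSubInv C K i j * (C j k : ℚ)
        - cartanSubInv C K i s / cartanSubInv C K s s
          * (cartanSubInv C K s j * (C j k : ℚ)) := by
    intro j _
    rw [erow]
    ring
  rw [Finset.sum_congr rfl hd, Finset.sum_sub_distrib, ← Finset.mul_sum,
    inv_mul_sum hC hiK hk, inv_mul_sum hC hsK hk]

lemma csi_eq_erow (hC : IsFiniteCartan C) {J : Finset (Fin n)} {s : Fin n} (hs : s ∉ J)
    {i j : Fin n} (hi : i ∈ J) (hj : j ∈ J) :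
    cartanSubInv C J i j = erow C (insert s J) i s j := by
  set K := insert s J with hK
  -- the matrix built from `erow` is a left inverse of `SQ C J`
  set E : Matrix {x // x ∈ J} {x // x ∈ J} ℚ :=
    Matrix.of (fun a b => erow C K (↑a) s (↑b)) with hE
  have hleft : E * SQ C J = 1 := by
    ext a b
    rw [Matrix.mul_apply]
    have h1 : ∑ c : {x // x ∈ J}, E a c * SQ C J c b
        = ∑ j ∈ J.attach, erow C K (↑a) s ↑j * (C ↑j ↑b : ℚ) := by
      rw [Finset.univ_eq_attach]
      refine Finset.sum_congr rfl fun c _ => ?_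
      simp [hE, SQ, Matrix.submatrix_apply, Matrix.map_apply]
    rw [h1, Finset.sum_attach J (fun j => erow C K (↑a) s j * (C j (↑b) : ℚ))]
    have h2 : ∑ j ∈ K, erow C K (↑a) s j * (C j (↑b) : ℚ)
        = ∑ j ∈ J, erow C K (↑a) s j * (C j (↑b) : ℚ) := by
      rw [hK, Finset.sum_insert hs, erow_self hC (Finset.mem_insert_self s J), zero_mul,
        zero_add]
    have h3 := erow_sum hC hs a.2 (Finset.mem_insert_of_mem b.2)
    rw [← h2, h3]
    have hsb : s ≠ (↑b : Fin n) := fun h => hs (h ▸ b.2)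
    rw [if_neg hsb, mul_zero, sub_zero, Matrix.one_apply]
    by_cases hab : a = b
    · subst hab; simp
    · rw [if_neg hab, if_neg (fun h => hab (Subtype.ext h))]
  have hinv : (SQ C J)⁻¹ = E := Matrix.inv_eq_left_inv hleft
  rw [csi_apply hi hj, hinv]
  rfl

lemma key_schur (hC : IsFiniteCartan C) {J : Finset (Fin n)} {i s : Fin n}
    (hi : i ∈ J) (hs : s ∉ J) :
    ∑ j ∈ J, cartanSubInv C J i j * (C j s : ℚ)
      = -(cartanSubInv C (insert s J) i s / cartanSubInv C (insert s J) s s) := by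
  set K := insert s J with hK
  have hsK : s ∈ K := Finset.mem_insert_self s J
  have h1 : ∑ j ∈ J, cartanSubInv C J i j * (C j s : ℚ)
      = ∑ j ∈ J, erow C K i s j * (C j s : ℚ) :=
    Finset.sum_congr rfl fun j hj => by rw [csi_eq_erow hC hs hi hj]
  have h2 : ∑ j ∈ K, erow C K i s j * (C j s : ℚ)
      = ∑ j ∈ J, erow C K i s j * (C j s : ℚ) := by
    rw [hK, Finset.sum_insert hs, erow_self hC hsK, zero_mul, zero_add]
  have h3 := erow_sum hC hs hi hsK
  have his : i ≠ s := fun h => hs (h ▸ hi)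
  rw [h1, ← h2, h3, if_neg his, if_pos rfl, mul_one, zero_sub]


open MvPolynomial in
/-- The linear part of the `j`-th generator. -/
noncomputable def glin (C : Matrix (Fin n) (Fin n) ℤ) (j : Fin n) : MvPolynomial (Fin n) ℚ :=
  ∑ k : Fin n, MvPolynomial.C ((C j k : ℚ)) * MvPolynomial.X k

open MvPolynomial in
lemma glin_mul (j : Fin n) :
    glin C j * MvPolynomial.X j
      = ∑ k : Fin n, MvPolynomial.C ((C j k : ℚ)) * MvPolynomial.X j * MvPolynomial.X k := by
  rw [glin, Finset.sum_mul]
  exact Finset.sum_congr rfl fun k _ => by ring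

open MvPolynomial in
lemma gen_mem (j : Fin n) :
    (∑ k : Fin n, MvPolynomial.C ((C j k : ℚ)) * MvPolynomial.X j * MvPolynomial.X k)
      ∈ petIdeal₀ C := Ideal.subset_span ⟨j, rfl⟩

open MvPolynomial in
lemma lin_identity (hC : IsFiniteCartan C) {J : Finset (Fin n)} {i : Fin n} (hi : i ∈ J) :
    (MvPolynomial.X i : MvPolynomial (Fin n) ℚ)
      - ∑ s ∈ Jᶜ, MvPolynomial.C
          (cartanSubInv C (insert s J) i s / cartanSubInv C (insert s J) s s)
          * MvPolynomial.X s
      = ∑ j ∈ J, MvPolynomial.C (cartanSubInv C J i j) * glin C j := by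
  have h1 : ∀ j ∈ J, MvPolynomial.C (cartanSubInv C J i j) * glin C j
      = ∑ k : Fin n, MvPolynomial.C (cartanSubInv C J i j * (C j k : ℚ)) * MvPolynomial.X k := by
    intro j _
    rw [glin, Finset.mul_sum]
    exact Finset.sum_congr rfl fun k _ => by rw [_root_.map_mul]; ring
  rw [Finset.sum_congr rfl h1, Finset.sum_comm]
  have h2 : ∀ k : Fin n,
      ∑ j ∈ J, MvPolynomial.C (cartanSubInv C J i j * (C j k : ℚ)) * MvPolynomial.X k
      = MvPolynomial.C (∑ j ∈ J, cartanSubInv C J i j * (C j k : ℚ)) * MvPolynomial.X k := by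
    intro k
    rw [map_sum, Finset.sum_mul]
  rw [Finset.sum_congr rfl fun k _ => h2 k]
  rw [← Finset.sum_add_sum_compl J
    (fun k => MvPolynomial.C (∑ j ∈ J, cartanSubInv C J i j * (C j k : ℚ)) * MvPolynomial.X k)]
  have h3 : ∑ k ∈ J,
      MvPolynomial.C (∑ j ∈ J, cartanSubInv C J i j * (C j k : ℚ)) * MvPolynomial.X k
      = MvPolynomial.X i := by
    have : ∀ k ∈ J, MvPolynomial.C (∑ j ∈ J, cartanSubInv C J i j * (C j k : ℚ))
        * MvPolynomial.X k
        = if i = k then MvPolynomial.X k else 0 := by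
      intro k hk
      rw [inv_mul_sum hC hi hk]
      by_cases h : i = k <;> simp [h]
    rw [Finset.sum_congr rfl this, Finset.sum_ite_eq J i (fun k => MvPolynomial.X k), if_pos hi]
  have h4 : ∑ k ∈ Jᶜ,
      MvPolynomial.C (∑ j ∈ J, cartanSubInv C J i j * (C j k : ℚ)) * MvPolynomial.X k
      = -∑ s ∈ Jᶜ, MvPolynomial.C
          (cartanSubInv C (insert s J) i s / cartanSubInv C (insert s J) s s)
          * MvPolynomial.X s := by
    rw [← Finset.sum_neg_distrib]
    refine Finset.sum_congr rfl fun k hk => ?_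
    rw [key_schur hC hi (Finset.mem_compl.1 hk), map_neg]
    ring
  rw [h3, h4]
  ring


open MvPolynomial in
lemma step_mem (hC : IsFiniteCartan C) {J : Finset (Fin n)} {i : Fin n} (hi : i ∈ J) :
    MvPolynomial.X i * (∏ j ∈ J, MvPolynomial.X j)
      - ∑ s ∈ Jᶜ, MvPolynomial.C
          (cartanSubInv C (insert s J) i s / cartanSubInv C (insert s J) s s)
          * ∏ j ∈ insert s J, MvPolynomial.X j
      ∈ petIdeal₀ C := by
  set P : MvPolynomial (Fin n) ℚ := ∏ j ∈ J, MvPolynomial.X j with hP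
  have hins : ∀ s ∈ Jᶜ, (∏ j ∈ insert s J, MvPolynomial.X j : MvPolynomial (Fin n) ℚ)
      = MvPolynomial.X s * P := fun s hs =>
    Finset.prod_insert (Finset.mem_compl.1 hs)
  have heq : MvPolynomial.X i * P
      - ∑ s ∈ Jᶜ, MvPolynomial.C
          (cartanSubInv C (insert s J) i s / cartanSubInv C (insert s J) s s)
          * ∏ j ∈ insert s J, MvPolynomial.X j
      = (MvPolynomial.X i
          - ∑ s ∈ Jᶜ, MvPolynomial.C
              (cartanSubInv C (insert s J) i s / cartanSubInv C (insert s J) s s)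
              * MvPolynomial.X s) * P := by
    rw [Finset.sum_congr rfl fun s hs => by rw [hins s hs]]
    rw [sub_mul, Finset.sum_mul]
    congr 1
    exact Finset.sum_congr rfl fun s _ => by ring
  rw [heq, lin_identity hC hi, Finset.sum_mul]
  refine Ideal.sum_mem _ fun j hj => ?_
  have hsplit : MvPolynomial.C (cartanSubInv C J i j) * glin C j * P
      = MvPolynomial.C (cartanSubInv C J i j) * (∏ k ∈ J.erase j, MvPolynomial.X k)
        * (glin C j * MvPolynomial.X j) := by
    rw [hP, ← Finset.mul_prod_erase J _ hj]
    ring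
  rw [hsplit, glin_mul]
  exact Ideal.mul_mem_left _ _ (gen_mem (C := C) j)


lemma Mmat_support {i : Fin n} {J K : Finset (Fin n)}
    (h : i ∈ K ∧ J ⊆ K ∧ K.card = J.card + 1) : ∃ s, s ∉ J ∧ K = insert s J := by
  obtain ⟨hiK, hJK, hcard⟩ := h
  have hc : (K \ J).card = 1 := by
    rw [Finset.card_sdiff_of_subset hJK, hcard]
    omega
  obtain ⟨s, hs⟩ := Finset.card_eq_one.1 hc
  have hsmem : s ∈ K \ J := hs ▸ Finset.mem_singleton_self s
  have hsJ : s ∉ J := (Finset.mem_sdiff.1 hsmem).2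
  refine ⟨s, hsJ, ?_⟩
  have hu := Finset.union_sdiff_of_subset hJK
  rw [hs] at hu
  rw [← hu, Finset.union_comm]
  exact Finset.insert_eq s J

lemma insert_sdiff_eq {s : Fin n} {J : Finset (Fin n)} (hs : s ∉ J) :
    insert s J \ J = {s} := by
  ext t
  simp only [Finset.mem_sdiff, Finset.mem_insert, Finset.mem_singleton]
  constructor
  · rintro ⟨h1 | h1, h2⟩
    · exact h1
    · exact absurd h1 h2
  · rintro rfl
    exact ⟨Or.inl rfl, hs⟩

lemma Mmat_insert (hC : IsFiniteCartan C) {i s : Fin n} {J : Finset (Fin n)} (hs : s ∉ J)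
    (hi : i ∈ insert s J) :
    Mmat C i J (insert s J)
      = cartanSubInv C (insert s J) i s / cartanSubInv C (insert s J) s s := by
  rw [Mmat]
  simp only [Matrix.of_apply]
  rw [if_pos ⟨hi, Finset.subset_insert s J, Finset.card_insert_of_notMem hs⟩,
    insert_sdiff_eq hs, Finset.sum_singleton]

open MvPolynomial in
lemma step_quot (hC : IsFiniteCartan C) (i : Fin n) (J : Finset (Fin n)) :
    Ideal.Quotient.mk (petIdeal₀ C) (MvPolynomial.X i) * petClass₀ C J
      = ∑ K : Finset (Fin n),
          Ideal.Quotient.mk (petIdeal₀ C) (MvPolynomial.C (Mmat C i J K)) * petClass₀ C K := by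
  by_cases hi : i ∈ J
  · -- `i ∈ J` : genuinely use the relations
    have himg : ∀ K ∈ Finset.univ, K ∉ Finset.image (fun s => insert s J) Jᶜ →
        Ideal.Quotient.mk (petIdeal₀ C) (MvPolynomial.C (Mmat C i J K)) * petClass₀ C K
          = 0 := by
      intro K _ hK
      suffices h : Mmat C i J K = 0 by rw [h]; simp
      rw [Mmat]
      simp only [Matrix.of_apply]
      rw [if_neg]
      intro h
      obtain ⟨s, hsJ, rfl⟩ := Mmat_support h
      exact hK (Finset.mem_image.2 ⟨s, Finset.mem_compl.2 hsJ, rfl⟩)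
    rw [← Finset.sum_subset (Finset.subset_univ (Finset.image (fun s => insert s J) Jᶜ)) himg]
    have hinj : ∀ x ∈ Jᶜ, ∀ y ∈ Jᶜ, insert x J = insert y J → x = y := by
      intro x hx y hy h
      have : x ∈ insert y J := h ▸ Finset.mem_insert_self x J
      rcases Finset.mem_insert.1 this with h1 | h1
      · exact h1
      · exact absurd h1 (Finset.mem_compl.1 hx)
    rw [Finset.sum_image hinj]
    have hval : ∀ s ∈ Jᶜ,
        Ideal.Quotient.mk (petIdeal₀ C) (MvPolynomial.C (Mmat C i J (insert s J)))
            * petClass₀ C (insert s J)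
          = Ideal.Quotient.mk (petIdeal₀ C)
              (MvPolynomial.C
                (cartanSubInv C (insert s J) i s / cartanSubInv C (insert s J) s s)
                * ∏ j ∈ insert s J, MvPolynomial.X j) := by
      intro s hs
      rw [Mmat_insert hC (Finset.mem_compl.1 hs) (Finset.mem_insert_of_mem hi), petClass₀,
        ← _root_.map_mul]
    rw [Finset.sum_congr rfl hval, ← map_sum, petClass₀, ← _root_.map_mul]
    rw [Ideal.Quotient.eq]
    exact step_mem hC hi
  · -- `i ∉ J` : multiplication is just `insert`
    rw [Fintype.sum_eq_single (insert i J) ?_]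
    · rw [Mmat_insert hC hi (Finset.mem_insert_self i J),
        div_self (csi_diag_pos hC (Finset.mem_insert_self i J)).ne']
      rw [show (Ideal.Quotient.mk (petIdeal₀ C)) (MvPolynomial.C (1 : ℚ)) = 1 by simp, one_mul,
        petClass₀, petClass₀, ← _root_.map_mul, Finset.prod_insert hi]
    · intro K hK
      suffices h : Mmat C i J K = 0 by rw [h]; simp
      rw [Mmat]
      simp only [Matrix.of_apply]
      rw [if_neg]
      intro h
      obtain ⟨s, hsJ, rfl⟩ := Mmat_support h
      rcases Finset.mem_insert.1 h.1 with h1 | h1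
      · exact hK (by rw [h1])
      · exact hi h1


open MvPolynomial in
lemma list_quot (hC : IsFiniteCartan C) (L : List (Fin n)) (J : Finset (Fin n)) :
    Ideal.Quotient.mk (petIdeal₀ C) ((L.map MvPolynomial.X).prod) * petClass₀ C J
      = ∑ K : Finset (Fin n),
          Ideal.Quotient.mk (petIdeal₀ C)
            (MvPolynomial.C ((L.map (Mmat C)).prod J K)) * petClass₀ C K := by
  induction L generalizing J with
  | nil =>
      simp only [List.map_nil, List.prod_nil, _root_.map_one, one_mul]
      rw [Fintype.sum_eq_single J ?_]
      · rw [Matrix.one_apply_eq]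
        simp
      · intro K hK
        rw [Matrix.one_apply_ne (Ne.symm hK)]
        simp
  | cons i L ih =>
      rw [List.map_cons, List.prod_cons, _root_.map_mul, List.map_cons, List.prod_cons]
      have h1 : Ideal.Quotient.mk (petIdeal₀ C) (MvPolynomial.X i)
            * Ideal.Quotient.mk (petIdeal₀ C) ((L.map MvPolynomial.X).prod) * petClass₀ C J
          = Ideal.Quotient.mk (petIdeal₀ C) ((L.map MvPolynomial.X).prod)
            * (Ideal.Quotient.mk (petIdeal₀ C) (MvPolynomial.X i) * petClass₀ C J) := by
        ring
      rw [h1, step_quot hC i J, Finset.mul_sum]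
      have h2 : ∀ K' : Finset (Fin n),
          Ideal.Quotient.mk (petIdeal₀ C) ((L.map MvPolynomial.X).prod)
            * (Ideal.Quotient.mk (petIdeal₀ C) (MvPolynomial.C (Mmat C i J K'))
                * petClass₀ C K')
          = Ideal.Quotient.mk (petIdeal₀ C) (MvPolynomial.C (Mmat C i J K'))
            * ∑ K : Finset (Fin n),
                Ideal.Quotient.mk (petIdeal₀ C)
                  (MvPolynomial.C ((L.map (Mmat C)).prod K' K)) * petClass₀ C K := by
        intro K'
        rw [← ih K']
        ring
      rw [Finset.sum_congr rfl fun K' _ => h2 K']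
      simp only [Finset.mul_sum]
      rw [Finset.sum_comm]
      refine Finset.sum_congr rfl fun K _ => ?_
      have h3 : ∀ K' : Finset (Fin n),
          Ideal.Quotient.mk (petIdeal₀ C) (MvPolynomial.C (Mmat C i J K'))
            * (Ideal.Quotient.mk (petIdeal₀ C)
                (MvPolynomial.C ((L.map (Mmat C)).prod K' K)) * petClass₀ C K)
          = Ideal.Quotient.mk (petIdeal₀ C)
              (MvPolynomial.C (Mmat C i J K' * (L.map (Mmat C)).prod K' K)) * petClass₀ C K := by
        intro K'
        rw [_root_.map_mul, _root_.map_mul]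
        ring
      rw [Finset.sum_congr rfl fun K' _ => h3 K', ← Finset.sum_mul, ← map_sum, ← map_sum,
        ← Matrix.mul_apply]

end PetAux


/-- in the ring `A⁰_C`, for all subsets `I, J ⊆ {1,…,n}`, with
`I = {i_1 < … < i_l}` in increasing order, one has
`ϖ_I · ϖ_J = ∑_{K} [M_{i_1}·M_{i_2}···M_{i_l}]_{(J,K)} · ϖ_K` (for `I = ∅` the empty product of
matrices is the identity matrix). -/
theorem peterson_structure_constants_nonequivariant {n : ℕ}
    (C : Matrix (Fin n) (Fin n) ℤ) (hC : IsFiniteCartan C)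
    (I J : Finset (Fin n)) :
    petClass₀ C I * petClass₀ C J =
      ∑ K : Finset (Fin n),
        Ideal.Quotient.mk (petIdeal₀ C)
          (MvPolynomial.C (((I.sort (· ≤ ·)).map (Mmat C)).prod J K)) * petClass₀ C K := by
  have h := PetAux.list_quot hC (I.sort (· ≤ ·)) J
  have hprod : ((I.sort (· ≤ ·)).map MvPolynomial.X).prod
      = ∏ j ∈ I, (MvPolynomial.X j : MvPolynomial (Fin n) ℚ) := by
    calc ((I.sort (· ≤ ·)).map MvPolynomial.X).prod
        = ((I.sort (· ≤ ·) : Multiset (Fin n)).map MvPolynomial.X).prod := by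
          rw [Multiset.map_coe, Multiset.prod_coe]
      _ = (I.val.map MvPolynomial.X).prod := by rw [Finset.sort_eq]
      _ = ∏ j ∈ I, MvPolynomial.X j := (Finset.prod_eq_multiset_prod _ _).symm
  rw [hprod] at h
  exact h
end

section
/- Let C be a finite-type Cartan matrix of size n, and let i_1, …, i_l be any finite sequence of indices in {1,…,n}. Then every entry of the product D_{i_1}·D_{i_2}···D_{i_l} of equivariant structure-constant matrices is a polynomial in t with nonnegative coefficients. -/
open Matrix Polynomial Filter

section Analysis

variable {m : Type*} [Fintype m] [DecidableEq m]

/-- powers of an entrywise-nonnegative matrix are entrywise nonnegative -/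
lemma pow_entry_nonneg {S : Matrix m m ℝ} (hS : ∀ i j, 0 ≤ S i j) (p : ℕ) :
    ∀ i j, 0 ≤ (S ^ p) i j := by
  induction p with
  | zero =>
    intro i j
    rw [pow_zero]
    rcases eq_or_ne i j with h | h <;> simp [Matrix.one_apply, h]
  | succ p ih =>
    intro i j
    rw [pow_succ, Matrix.mul_apply]
    exact Finset.sum_nonneg fun k _ => mul_nonneg (ih i k) (hS k j)

lemma dot_expand (M : Matrix m m ℝ) (x : m → ℝ) :
    dotProduct x (M *ᵥ x) = ∑ i, ∑ j, x i * (M i j * x j) := by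
  simp [dotProduct, Matrix.mulVec, Finset.mul_sum]

lemma posDef_diag_conj {M : Matrix m m ℝ} (hM : M.PosDef) (f : m → ℝ) (hf : ∀ i, f i ≠ 0) :
    ((Matrix.diagonal f)ᴴ * M * Matrix.diagonal f).PosDef := by
  rw [Matrix.posDef_iff_dotProduct_mulVec]
  constructor
  · exact Matrix.isHermitian_conjTranspose_mul_mul _ hM.1
  · intro x hx
    have hfx : Matrix.diagonal f *ᵥ x ≠ 0 := by
      obtain ⟨i, hi⟩ := Function.ne_iff.mp hx
      intro h
      apply hi
      have := congrFun h i
      simp only [Matrix.mulVec_diagonal, Pi.zero_apply, mul_eq_zero] at this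
      rcases this with h' | h'
      · exact absurd h' (hf i)
      · exact h'
    simpa only [Matrix.star_mulVec, Matrix.dotProduct_mulVec, Matrix.vecMul_vecMul] using
      hM.dotProduct_mulVec_pos hfx

lemma posDef_submatrix_subtype {M : Matrix m m ℝ} (hM : M.PosDef) (K : Finset m) :
    (M.submatrix (Subtype.val : {x // x ∈ K} → m) Subtype.val).PosDef := by
  rw [Matrix.posDef_iff_dotProduct_mulVec]
  constructor
  · exact hM.1.submatrix _
  · intro x hx
    set y : m → ℝ := fun j => if h : j ∈ K then x ⟨j, h⟩ else 0 with hy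
    have hy0 : y ≠ 0 := by
      obtain ⟨i, hi⟩ := Function.ne_iff.mp hx
      intro h
      apply hi
      have := congrFun h i.val
      simpa [hy, i.prop] using this
    have key := hM.dotProduct_mulVec_pos hy0
    have hred : ∀ f : m → ℝ, ∑ j, y j * f j = ∑ j : {t // t ∈ K}, x j * f j.val := by
      intro f
      rw [← Finset.sum_subset (Finset.subset_univ K) (fun j _ hj => by simp [hy, hj]),
        ← Finset.sum_coe_sort K (fun j => y j * f j)]
      refine Finset.sum_congr rfl fun j _ => ?_
      simp [hy, j.prop]
    rw [show (star y) = y from star_trivial y] at key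
    rw [show (star x) = x from star_trivial x]
    calc (0:ℝ) < dotProduct y (M *ᵥ y) := key
      _ = dotProduct x ((M.submatrix (Subtype.val : {x // x ∈ K} → m) Subtype.val) *ᵥ x) := by
        rw [dot_expand, dot_expand]
        simp_rw [← Finset.mul_sum]
        rw [hred (fun i => ∑ j, M i j * y j)]
        refine Finset.sum_congr rfl fun i _ => ?_
        congr 1
        rw [Finset.sum_congr rfl fun j (_ : j ∈ Finset.univ) => mul_comm (M i.val j) (y j),
          hred (fun j => M i.val j)]
        refine Finset.sum_congr rfl fun j _ => ?_
        simp only [Matrix.submatrix_apply]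
        ring

/-- Core lemma: a real matrix with 2's on the diagonal, nonpositive off-diagonal entries,
which is positive definite after symmetrization by a positive diagonal, has entrywise
nonnegative inverse. -/
lemma inv_entries_nonneg (A : Matrix m m ℝ) (hdiag : ∀ i, A i i = 2)
    (hoff : ∀ i j, i ≠ j → A i j ≤ 0) (d : m → ℝ) (hd : ∀ i, 0 < d i)
    (hpos : (Matrix.diagonal d * A).PosDef) : ∀ i j, 0 ≤ A⁻¹ i j := by
  set e : m → ℝ := fun i => Real.sqrt (d i) with he
  have he0 : ∀ i, 0 < e i := fun i => Real.sqrt_pos.mpr (hd i)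
  have he2 : ∀ i, e i ^ 2 = d i := fun i => Real.sq_sqrt (hd i).le
  have hsym : ∀ i j, d j * A j i = d i * A i j := by
    intro i j
    have h1 := congrFun (congrFun hpos.1 i) j
    simpa [Matrix.conjTranspose_apply, Matrix.diagonal_mul] using h1
  set f : m → ℝ := fun i => (e i)⁻¹ with hf
  have hf0 : ∀ i, f i ≠ 0 := fun i => inv_ne_zero (he0 i).ne'
  set A' : Matrix m m ℝ := Matrix.diagonal e * A * Matrix.diagonal f with hA'def
  have hA'app : ∀ i j, A' i j = e i * A i j * f j := by
    intro i j
    simp [hA'def, Matrix.diagonal_mul, Matrix.mul_diagonal]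
  have hkey : (Matrix.diagonal f)ᴴ * (Matrix.diagonal d * A) * Matrix.diagonal f = A' := by
    have h1 : (Matrix.diagonal f)ᴴ = Matrix.diagonal f := by
      simp [Matrix.diagonal_conjTranspose]
    rw [h1, hA'def, ← Matrix.mul_assoc, Matrix.diagonal_mul_diagonal]
    have hfd : (fun i => f i * d i) = e := by
      funext i
      have h0 : e i ≠ 0 := (he0 i).ne'
      rw [← he2 i, sq, hf]
      field_simp
    rw [hfd]
  have hA'pos : A'.PosDef := hkey ▸ posDef_diag_conj hpos f hf0
  set S : Matrix m m ℝ := (2:ℝ) • (1 : Matrix m m ℝ) - A' with hSdef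
  have hA'eq : A' = (2:ℝ) • (1 : Matrix m m ℝ) - S := by rw [hSdef]; abel
  have hSapp : ∀ i j, 0 ≤ S i j := by
    intro i j
    rcases eq_or_ne i j with rfl | hij
    · have hdg : A' i i = 2 := by
        have h0 : e i ≠ 0 := (he0 i).ne'
        rw [hA'app, hdiag i, hf]
        rw [mul_comm (e i) 2, mul_assoc, mul_inv_cancel₀ h0, mul_one]
      have : S i i = 0 := by
        simp [hSdef, Matrix.sub_apply, Matrix.smul_apply, Matrix.one_apply, hdg]
      rw [this]
    · have hSij : S i j = - A' i j := by
        simp [hSdef, Matrix.sub_apply, Matrix.smul_apply, Matrix.one_apply, hij]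
      rw [hSij, neg_nonneg, hA'app]
      have h3 := hoff i j hij
      have h1 := (he0 i).le
      have h2 : (0:ℝ) ≤ f j := le_of_lt (by rw [hf]; exact inv_pos.mpr (he0 j))
      nlinarith [mul_nonneg h1 h2]
  have hsm1 : (((2:ℝ) • (1 : Matrix m m ℝ))).IsHermitian := by
    unfold Matrix.IsHermitian
    rw [Matrix.conjTranspose_smul, Matrix.conjTranspose_one, star_trivial]
  have hS : S.IsHermitian := by
    rw [hSdef]
    exact hsm1.sub hA'pos.1
  -- positive definiteness of 2•1 + S
  have hplus : ((2:ℝ) • (1 : Matrix m m ℝ) + S).PosDef := by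
    rw [Matrix.posDef_iff_dotProduct_mulVec]
    constructor
    · exact hsm1.add hS
    · intro x hx
      set y : m → ℝ := fun i => |x i| with hy
      have hy0 : y ≠ 0 := by
        intro h
        apply hx
        funext i
        have := congrFun h i
        simpa [hy, abs_eq_zero] using this
      have hq := hA'pos.dotProduct_mulVec_pos hy0
      rw [show (star y) = y from star_trivial y, hA'eq] at hq
      rw [show (star x) = x from star_trivial x]
      have expand : ∀ (z : m → ℝ) (c : ℝ) (M : Matrix m m ℝ),
          dotProduct z ((c • (1 : Matrix m m ℝ) + M) *ᵥ z)
            = c * (∑ i, z i ^ 2) + ∑ i, ∑ j, z i * (M i j * z j) := by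
        intro z c M
        rw [Matrix.add_mulVec, Matrix.smul_mulVec, Matrix.one_mulVec,
          dotProduct_add, dotProduct_smul, dot_expand]
        congr 1
        simp [dotProduct, smul_eq_mul, Finset.mul_sum, sq]
      have expand' : ∀ (z : m → ℝ) (c : ℝ) (M : Matrix m m ℝ),
          dotProduct z ((c • (1 : Matrix m m ℝ) - M) *ᵥ z)
            = c * (∑ i, z i ^ 2) - ∑ i, ∑ j, z i * (M i j * z j) := by
        intro z c M
        have := expand z c (-M)
        simpa [sub_eq_add_neg] using this
      rw [expand' y 2 S] at hq
      rw [expand x 2 S]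
      have hsq : ∑ i, y i ^ 2 = ∑ i, x i ^ 2 := by
        refine Finset.sum_congr rfl fun i _ => by simp [hy, sq_abs]
      rw [hsq] at hq
      have hterm : ∑ i, ∑ j, x i * (S i j * x j) ≥ -(∑ i, ∑ j, y i * (S i j * y j)) := by
        rw [← Finset.sum_neg_distrib]
        refine Finset.sum_le_sum fun i _ => ?_
        rw [← Finset.sum_neg_distrib]
        refine Finset.sum_le_sum fun j _ => ?_
        have h1 : |x i * (S i j * x j)| = y i * (S i j * y j) := by
          rw [abs_mul, abs_mul, abs_of_nonneg (hSapp i j)]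
        calc -(y i * (S i j * y j)) = -|x i * (S i j * x j)| := by rw [h1]
          _ ≤ x i * (S i j * x j) := neg_abs_le _
      linarith
  -- eigenvalue bounds
  have hev : ∀ r, |hS.eigenvalues r| < 2 := by
    intro r
    set v : m → ℝ := ⇑(hS.eigenvectorBasis r) with hv
    have hv0 : v ≠ 0 := by
      have := hS.eigenvectorBasis.orthonormal.ne_zero r
      intro h
      apply this
      apply PiLp.ext
      intro i
      exact congrFun h i
    have hvv : 0 < dotProduct v v := by
      have := Matrix.dotProduct_star_self_pos_iff (v := v) (R := ℝ)
      rw [star_trivial] at this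
      exact this.mpr hv0
    have hmu : S *ᵥ v = hS.eigenvalues r • v := hS.mulVec_eigenvectorBasis r
    have hq1 := hA'pos.dotProduct_mulVec_pos hv0
    rw [show (star v) = v from star_trivial v, hA'eq, Matrix.sub_mulVec, hmu,
      Matrix.smul_mulVec, Matrix.one_mulVec, dotProduct_sub,
      dotProduct_smul, dotProduct_smul] at hq1
    have hq2 := hplus.dotProduct_mulVec_pos hv0
    rw [show (star v) = v from star_trivial v, Matrix.add_mulVec, hmu,
      Matrix.smul_mulVec, Matrix.one_mulVec, dotProduct_add,
      dotProduct_smul, dotProduct_smul] at hq2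
    simp only [smul_eq_mul] at hq1 hq2
    rw [abs_lt]
    constructor <;> nlinarith
  -- spectral decomposition of powers
  set U : Matrix m m ℝ := ↑(hS.eigenvectorUnitary) with hU
  have hU1 : star U * U = 1 := (Matrix.mem_unitaryGroup_iff').mp hS.eigenvectorUnitary.2
  have hU2 : U * star U = 1 := (Matrix.mem_unitaryGroup_iff).mp hS.eigenvectorUnitary.2
  have hspec0 := hS.spectral_theorem
  set lam : m → ℝ := hS.eigenvalues with hlam
  have hspec : S = U * Matrix.diagonal lam * star U := by
    rw [hspec0, RCLike.ofReal_real_eq_id, Function.id_comp]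
    exact Unitary.conjStarAlgAut_apply _ _
  have hpow : ∀ p : ℕ, S ^ p = U * Matrix.diagonal (fun r => lam r ^ p) * star U := by
    intro p
    induction p with
    | zero =>
      simp only [pow_zero]
      rw [show Matrix.diagonal (fun _ : m => (1:ℝ)) = 1 from Matrix.diagonal_one,
        Matrix.mul_one, hU2]
    | succ p ih =>
      have cancel : ∀ X : Matrix m m ℝ, star U * (U * X) = X := by
        intro X; rw [← Matrix.mul_assoc, hU1, Matrix.one_mul]
      rw [pow_succ, ih, hspec]
      simp only [Matrix.mul_assoc]
      rw [cancel]
      rw [show Matrix.diagonal (fun r => lam r ^ p) * (Matrix.diagonal lam * star U)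
            = Matrix.diagonal (fun r => lam r ^ (p+1)) * star U by
        rw [← Matrix.mul_assoc, Matrix.diagonal_mul_diagonal,
          show (fun i => lam i ^ p * lam i) = (fun r => lam r ^ (p+1))
            from funext fun r => (pow_succ _ _).symm]]
  have hentry : ∀ (p : ℕ) i j,
      (S ^ p) i j = ∑ r, U i r * (lam r ^ p * (star U) r j) := by
    intro p i j
    rw [hpow p, Matrix.mul_assoc, Matrix.mul_apply]
    refine Finset.sum_congr rfl fun r _ => ?_
    rw [Matrix.diagonal_mul]
  -- entrywise decay of (1/2)^p * S^p
  have htend : ∀ i j, Filter.Tendsto (fun p => (2⁻¹:ℝ)^p * (S^p) i j) Filter.atTop (nhds 0) := by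
    intro i j
    have heq : (fun p => (2⁻¹:ℝ)^p * (S^p) i j)
        = fun p => ∑ r, (U i r * (star U) r j) * (lam r * 2⁻¹) ^ p := by
      funext p
      rw [hentry p i j, Finset.mul_sum]
      refine Finset.sum_congr rfl fun r _ => ?_
      rw [mul_pow]
      ring
    rw [heq]
    rw [show (0:ℝ) = ∑ _r : m, (0:ℝ) by simp]
    refine tendsto_finset_sum _ fun r _ => ?_
    have habs : |lam r * 2⁻¹| < 1 := by
      rw [abs_mul]
      have h3 := hev r
      have h2 : |(2:ℝ)⁻¹| = 2⁻¹ := abs_of_pos (by norm_num)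
      rw [h2]
      linarith
    simpa using (tendsto_pow_atTop_nhds_zero_of_abs_lt_one habs).const_mul
      (U i r * (star U) r j)
  -- Neumann partial sums
  have hdet : IsUnit A'.det := hA'pos.det_pos.ne'.isUnit
  set P : ℕ → Matrix m m ℝ := fun p => ∑ t ∈ Finset.range p, ((2:ℝ)⁻¹)^(t+1) • S^t with hP
  have hAP : ∀ p, A' * P p = 1 - ((2:ℝ)⁻¹)^p • S^p := by
    intro p
    induction p with
    | zero => simp [hP]
    | succ p ih =>
      have hAS : A' * S ^ p = (2:ℝ) • S ^ p - S ^ (p+1) := by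
        rw [hA'eq, Matrix.sub_mul, Matrix.smul_mul, Matrix.one_mul, ← pow_succ']
      have hsplit : P (p+1) = P p + ((2:ℝ)⁻¹)^(p+1) • S^p := by
        rw [hP]
        exact Finset.sum_range_succ _ p
      rw [hsplit, Matrix.mul_add, ih, Matrix.mul_smul, hAS, smul_sub, smul_smul,
        show ((2:ℝ)⁻¹)^(p+1) * 2 = ((2:ℝ)⁻¹)^p by rw [pow_succ]; ring]
      abel
  have hPle : ∀ p i j, 0 ≤ P p i j := by
    intro p i j
    simp only [hP]
    rw [Matrix.sum_apply]
    refine Finset.sum_nonneg fun t _ => ?_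
    rw [Matrix.smul_apply, smul_eq_mul]
    exact mul_nonneg (pow_nonneg (by norm_num) _) (pow_entry_nonneg hSapp t i j)
  have hPeq : ∀ p, P p = A'⁻¹ - ((2:ℝ)⁻¹)^p • (A'⁻¹ * S^p) := by
    intro p
    have h0 : A'⁻¹ * (A' * P p) = P p := by
      rw [← Matrix.mul_assoc, Matrix.nonsing_inv_mul _ hdet, Matrix.one_mul]
    rw [hAP p] at h0
    rw [← h0, Matrix.mul_sub, Matrix.mul_one, Matrix.mul_smul]
  have hinvnn : ∀ i j, 0 ≤ A'⁻¹ i j := by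
    intro i j
    have heq : (fun p => P p i j)
        = fun p => A'⁻¹ i j - ∑ k, A'⁻¹ i k * ((2⁻¹:ℝ)^p * (S^p) k j) := by
      funext p
      rw [hPeq p, Matrix.sub_apply, Matrix.smul_apply, Matrix.mul_apply, smul_eq_mul,
        Finset.mul_sum]
      congr 1
      refine Finset.sum_congr rfl fun k _ => by ring
    have hzero : Filter.Tendsto (fun p => ∑ k, A'⁻¹ i k * ((2⁻¹:ℝ)^p * (S^p) k j))
        Filter.atTop (nhds 0) := by
      rw [show (0:ℝ) = ∑ _k : m, (0:ℝ) by simp]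
      exact tendsto_finset_sum _ fun k _ => by
        simpa using (htend k j).const_mul (A'⁻¹ i k)
    have htendP : Filter.Tendsto (fun p => P p i j) Filter.atTop (nhds (A'⁻¹ i j)) := by
      rw [heq]
      simpa using (tendsto_const_nhds (x := A'⁻¹ i j) (f := Filter.atTop (α := ℕ))).sub hzero
    exact ge_of_tendsto' htendP (fun p => hPle p i j)
  -- transport back to A
  have hef : Matrix.diagonal e * Matrix.diagonal f = 1 := by
    rw [Matrix.diagonal_mul_diagonal]
    rw [show (fun i => e i * f i) = fun _ : m => (1:ℝ) by
      funext i; rw [hf]; exact mul_inv_cancel₀ (he0 i).ne']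
    exact Matrix.diagonal_one
  have hfe : Matrix.diagonal f * Matrix.diagonal e = 1 := by
    rw [Matrix.diagonal_mul_diagonal]
    rw [show (fun i => f i * e i) = fun _ : m => (1:ℝ) by
      funext i; rw [hf]; exact inv_mul_cancel₀ (he0 i).ne']
    exact Matrix.diagonal_one
  have hA : Matrix.diagonal f * A' * Matrix.diagonal e = A := by
    ext i j
    rw [Matrix.mul_diagonal, Matrix.diagonal_mul, hA'app]
    have h0i : e i ≠ 0 := (he0 i).ne'
    have h0j : e j ≠ 0 := (he0 j).ne'
    rw [hf]
    field_simp
  have h1 : A' * A'⁻¹ = 1 := Matrix.mul_nonsing_inv _ hdet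
  have hAB : A * (Matrix.diagonal f * A'⁻¹ * Matrix.diagonal e) = 1 := by
    rw [← hA]
    calc Matrix.diagonal f * A' * Matrix.diagonal e * (Matrix.diagonal f * A'⁻¹ * Matrix.diagonal e)
        = Matrix.diagonal f * (A' * (Matrix.diagonal e * Matrix.diagonal f) * A'⁻¹) * Matrix.diagonal e := by
          simp only [Matrix.mul_assoc]
      _ = 1 := by rw [hef, Matrix.mul_one, h1, Matrix.mul_one, hfe]
  have hAinv : A⁻¹ = Matrix.diagonal f * A'⁻¹ * Matrix.diagonal e :=
    Matrix.inv_eq_right_inv hAB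
  intro i j
  rw [hAinv, Matrix.mul_diagonal, Matrix.diagonal_mul]
  have h2 : (0:ℝ) ≤ f i := le_of_lt (by rw [hf]; exact inv_pos.mpr (he0 i))
  exact mul_nonneg (mul_nonneg h2 (hinvnn i j)) (he0 j).le

end Analysis



lemma cartanSubInv_nonneg {n : ℕ} (C : Matrix (Fin n) (Fin n) ℤ) (hC : IsFiniteCartan C)
    (K : Finset (Fin n)) (i k : Fin n) : 0 ≤ cartanSubInv C K i k := by
  rw [cartanSubInv]
  by_cases hi : i ∈ K
  swap
  · rw [dif_neg hi]
  by_cases hk : k ∈ K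
  swap
  · rw [dif_pos hi, dif_neg hk]
  rw [dif_pos hi, dif_pos hk]
  obtain ⟨-, h2, hoffC, D, hDdiag, hDpos, hDApos⟩ := hC
  set B : Matrix {x // x ∈ K} {x // x ∈ K} ℚ :=
    (C.map (Int.cast : ℤ → ℚ)).submatrix (Subtype.val : {x // x ∈ K} → Fin n) Subtype.val
    with hB
  set AR : Matrix {x // x ∈ K} {x // x ∈ K} ℝ :=
    (C.map (Int.cast : ℤ → ℝ)).submatrix (Subtype.val : {x // x ∈ K} → Fin n) Subtype.val
    with hAR
  set d : {x // x ∈ K} → ℝ := fun x => D x.val x.val with hd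
  have hdpos : ∀ x, 0 < d x := fun x => hDpos x.val
  have hsub : Matrix.diagonal d * AR
      = (D * C.map (Int.cast : ℤ → ℝ)).submatrix (Subtype.val : {x // x ∈ K} → Fin n)
          Subtype.val := by
    ext a b
    rw [Matrix.diagonal_mul, hAR, Matrix.submatrix_apply, Matrix.submatrix_apply,
      Matrix.mul_apply]
    rw [Finset.sum_eq_single a.val]
    · intro t _ ht
      rw [hDdiag (Ne.symm ht), zero_mul]
    · intro h
      exact absurd (Finset.mem_univ _) h
  have hARpos : (Matrix.diagonal d * AR).PosDef := by
    rw [hsub]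
    exact posDef_submatrix_subtype hDApos K
  have hARdiag : ∀ a, AR a a = 2 := by
    intro a
    rw [hAR, Matrix.submatrix_apply, Matrix.map_apply, h2 a.val]
    norm_num
  have hARoff : ∀ a b, a ≠ b → AR a b ≤ 0 := by
    intro a b hab
    rw [hAR, Matrix.submatrix_apply, Matrix.map_apply]
    exact_mod_cast hoffC a.val b.val (fun hv => hab (Subtype.ext hv))
  have key := inv_entries_nonneg AR hARdiag hARoff d hdpos hARpos ⟨i, hi⟩ ⟨k, hk⟩
  have hmap : AR = B.map (Rat.cast : ℚ → ℝ) := by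
    ext a b
    simp [hAR, hB, Matrix.map_apply, Matrix.submatrix_apply]
  have hdetAR : AR.det ≠ 0 := by
    have h1 : (Matrix.diagonal d * AR).det ≠ 0 := hARpos.det_pos.ne'
    rw [Matrix.det_mul] at h1
    exact right_ne_zero_of_mul h1
  have hco : ∀ M : Matrix {x // x ∈ K} {x // x ∈ K} ℚ,
      M.map (Rat.cast : ℚ → ℝ) = M.map ⇑(Rat.castHom ℝ) := fun _ => rfl
  have hdetB : B.det ≠ 0 := by
    intro h
    apply hdetAR
    have hdm := RingHom.map_det (Rat.castHom ℝ) B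
    rw [RingHom.mapMatrix_apply] at hdm
    rw [hmap, hco B, ← hdm, h]
    simp
  have hBinv : B * B⁻¹ = 1 := Matrix.mul_nonsing_inv _ (Ne.isUnit hdetB)
  have hARinv : AR⁻¹ = (B⁻¹).map (Rat.cast : ℚ → ℝ) := by
    apply Matrix.inv_eq_right_inv
    rw [hmap, hco B, hco B⁻¹, ← Matrix.map_mul, hBinv]
    simp
  rw [hARinv] at key
  simp only [Matrix.map_apply] at key
  exact_mod_cast key

lemma coeff_mul_nonneg {p q : Polynomial ℚ} (hp : ∀ m, 0 ≤ p.coeff m)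
    (hq : ∀ m, 0 ≤ q.coeff m) : ∀ m, 0 ≤ (p * q).coeff m := by
  intro m
  rw [Polynomial.coeff_mul]
  exact Finset.sum_nonneg fun x _ => mul_nonneg (hp _) (hq _)

lemma Dmat_coeff_nonneg {n : ℕ} (C : Matrix (Fin n) (Fin n) ℤ) (hC : IsFiniteCartan C)
    (i : Fin n) (J K : Finset (Fin n)) (m : ℕ) : 0 ≤ ((Dmat C i) J K).coeff m := by
  rw [Dmat, Matrix.of_apply]
  split
  · rw [Polynomial.coeff_C]
    split
    · refine Finset.sum_nonneg fun s _ => ?_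
      exact div_nonneg (cartanSubInv_nonneg C hC K i s) (cartanSubInv_nonneg C hC K s s)
    · exact le_rfl
  split
  · refine coeff_mul_nonneg (coeff_mul_nonneg ?_ ?_) ?_ m
    · intro p
      rw [show (2 : Polynomial ℚ) = Polynomial.C 2 by norm_cast, Polynomial.coeff_C]
      split <;> norm_num
    · intro p
      rw [Polynomial.coeff_X]
      split <;> norm_num
    · intro p
      rw [Polynomial.coeff_C]
      split
      · exact Finset.sum_nonneg fun s _ => cartanSubInv_nonneg C hC K i s
      · exact le_rfl
  · simp

/-- Let `C` be a finite-type Cartan matrix of size `n`, and let `i_1, …, i_l` be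
any finite sequence of indices.  Then every entry of the product `D_{i_1}·D_{i_2}···D_{i_l}` of
equivariant structure-constant matrices is a polynomial in `t` with nonnegative coefficients. -/
theorem peterson_structure_constants_positive {n : ℕ}
    (C : Matrix (Fin n) (Fin n) ℤ) (hC : IsFiniteCartan C)
    (l : List (Fin n)) (J K : Finset (Fin n)) (m : ℕ) :
    0 ≤ ((l.map (Dmat C)).prod J K).coeff m := by
  induction l generalizing J m with
  | nil =>
    simp only [List.map_nil, List.prod_nil]
    rcases eq_or_ne J K with rfl | h
    · rw [Matrix.one_apply_eq, Polynomial.coeff_one]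
      split <;> norm_num
    · rw [Matrix.one_apply_ne h]
      simp
  | cons i l ih =>
    rw [List.map_cons, List.prod_cons, Matrix.mul_apply, Polynomial.finset_sum_coeff]
    refine Finset.sum_nonneg fun L _ => ?_
    exact coeff_mul_nonneg (Dmat_coeff_nonneg C hC i J L) (fun p => ih L p) m
end
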